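/- arXiv:1710.00914 — 10 statements merged into one kernel-verified Lean document; each statement's English description precedes it below -/
import Mathlib

section
/- Let p, q, u, v be pairwise coprime positive integers, N = pquv, r₁ = pu, s₁ = qv, r₂ = pv, s₂ = qu. For i = 1, 2 let s̄ᵢ be an integer with sᵢ s̄ᵢ ≡ 1 (mod rᵢ) and set τ_{rᵢ} = [[1, (s̄ᵢ sᵢ − 1)/rᵢ], [rᵢ, s̄ᵢ sᵢ]] ∈ SL₂(ℤ). Then the double coset τ_{r₁}⁻¹ · Γ₀(N) · τ_{r₂} (the set of products τ_{r₁}⁻¹ γ τ_{r₂} with γ ∈ Γ₀(N)) equals the set { M ∈ SL₂(ℤ) : v divides M₁₁, q divides M₁₂, p divides M₂₁, u divides M₂₂ }. -/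
open Matrix

/-- **Double coset computation for Atkin–Lehner scaling matrices** (Equation (2.12) of the
paper): with `N = pquv`, `r₁ = pu`, `s₁ = qv`, `r₂ = pv`, `s₂ = qu`, and
`τ_{rᵢ} = !![1, (s̄ᵢsᵢ - 1)/rᵢ; rᵢ, s̄ᵢsᵢ]`, the double coset `τ_{r₁}⁻¹ Γ₀(N) τ_{r₂}`
consists exactly of the integral unimodular matrices `!![xv, yq; zp, wu]`. -/
theorem stmt_0 (p q u v : ℤ) (hp : 0 < p) (hq : 0 < q) (hu : 0 < u) (hv : 0 < v)
    (hpq : IsCoprime p q) (hpu : IsCoprime p u) (hpv : IsCoprime p v)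
    (hqu : IsCoprime q u) (hqv : IsCoprime q v) (huv : IsCoprime u v)
    (sbar₁ sbar₂ b₁ b₂ : ℤ)
    (h₁ : sbar₁ * (q * v) - 1 = (p * u) * b₁)
    (h₂ : sbar₂ * (q * u) - 1 = (p * v) * b₂) :
    {M : Matrix (Fin 2) (Fin 2) ℤ |
      ∃ γ : Matrix (Fin 2) (Fin 2) ℤ, γ.det = 1 ∧ (p * q * u * v) ∣ γ 1 0 ∧
        M = (!![1, b₁; p * u, sbar₁ * (q * v)])⁻¹ * γ * !![1, b₂; p * v, sbar₂ * (q * u)]} =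
    {M : Matrix (Fin 2) (Fin 2) ℤ |
      M.det = 1 ∧ v ∣ M 0 0 ∧ q ∣ M 0 1 ∧ p ∣ M 1 0 ∧ u ∣ M 1 1} := by
  have hinv1 : (!![(1:ℤ), b₁; p * u, sbar₁ * (q * v)])⁻¹ =
      !![sbar₁ * (q * v), -b₁; -(p * u), 1] := by
    apply Matrix.inv_eq_left_inv
    rw [Matrix.mul_fin_two]
    ext i j
    fin_cases i <;> fin_cases j <;> simp <;> linarith [h₁]
  have hinv2 : !![sbar₂ * (q * u), -b₂; -(p * v), (1:ℤ)] * !![1, b₂; p * v, sbar₂ * (q * u)] = 1 := by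
    rw [Matrix.mul_fin_two]
    ext i j
    fin_cases i <;> fin_cases j <;> simp <;> linarith [h₂]
  ext M
  simp only [Set.mem_setOf_eq]
  constructor
  · rintro ⟨γ, hdet, ⟨k, hk⟩, rfl⟩
    rw [hinv1, γ.eta_fin_two, Matrix.mul_fin_two, Matrix.mul_fin_two]
    have hk' : γ 1 0 = p * q * u * v * k := hk
    refine ⟨?_, ?_, ?_, ?_, ?_⟩
    · rw [Matrix.det_fin_two_of]
      have : (γ 0 0) * (γ 1 1) - (γ 0 1) * (γ 1 0) = 1 := by
        rw [← Matrix.det_fin_two]; exact hdet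
      linear_combination ((sbar₁ * (q * v) - p * u * b₁) * (sbar₂ * (q * u) - p * v * b₂)) * this +
        (sbar₁ * (q * v) - p * u * b₁) * h₂ + h₁
    · simp only [Matrix.cons_val', Matrix.cons_val_zero, Matrix.cons_val_one,
        Matrix.head_cons, Matrix.head_fin_const, Matrix.of_apply, Matrix.empty_val',
        Matrix.cons_val_fin_one]
      exact ⟨sbar₁ * q * γ 0 0 - b₁ * p * q * u * k +
        (sbar₁ * (q * v) * γ 0 1 - b₁ * γ 1 1) * p, by linear_combination (-b₁) * hk'⟩
    · simp only [Matrix.cons_val', Matrix.cons_val_zero, Matrix.cons_val_one,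
        Matrix.head_cons, Matrix.head_fin_const, Matrix.of_apply, Matrix.empty_val',
        Matrix.cons_val_fin_one]
      exact ⟨sbar₁ * v * γ 0 0 * b₂ - b₁ * p * u * v * k * b₂ +
        (sbar₁ * (q * v) * γ 0 1 - b₁ * γ 1 1) * sbar₂ * u,
        by linear_combination (-b₁ * b₂) * hk'⟩
    · simp only [Matrix.cons_val', Matrix.cons_val_zero, Matrix.cons_val_one,
        Matrix.head_cons, Matrix.head_fin_const, Matrix.of_apply, Matrix.empty_val',
        Matrix.cons_val_fin_one]
      exact ⟨-u * γ 0 0 + q * u * v * k + (-(p * u) * γ 0 1 + γ 1 1) * v,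
        by linear_combination hk'⟩
    · simp only [Matrix.cons_val', Matrix.cons_val_zero, Matrix.cons_val_one,
        Matrix.head_cons, Matrix.head_fin_const, Matrix.of_apply, Matrix.empty_val',
        Matrix.cons_val_fin_one]
      exact ⟨-p * γ 0 0 * b₂ + p * q * v * k * b₂ +
        (-(p * u) * γ 0 1 + γ 1 1) * sbar₂ * q, by linear_combination b₂ * hk'⟩
  · rintro ⟨hdet, ⟨x, hx⟩, ⟨y, hy⟩, ⟨z, hz⟩, ⟨w, hw⟩⟩
    refine ⟨!![1, b₁; p * u, sbar₁ * (q * v)] * M * !![sbar₂ * (q * u), -b₂; -(p * v), 1],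
      ?_, ?_, ?_⟩
    · rw [Matrix.det_mul, Matrix.det_mul, hdet, Matrix.det_fin_two_of, Matrix.det_fin_two_of]
      linear_combination (sbar₁ * (q * v) - p * u * b₁) * h₂ + h₁
    · rw [M.eta_fin_two, Matrix.mul_fin_two, Matrix.mul_fin_two]
      simp only [Matrix.cons_val', Matrix.cons_val_zero, Matrix.cons_val_one,
        Matrix.head_cons, Matrix.head_fin_const, Matrix.of_apply, Matrix.empty_val',
        Matrix.cons_val_fin_one]
      exact ⟨u * x * sbar₂ + sbar₁ * sbar₂ * q * z - p * y - sbar₁ * w * v,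
        by linear_combination (p * u * sbar₂ * q * u) * hx +
          (sbar₁ * q * v * sbar₂ * q * u) * hz + (-p * u * p * v) * hy +
          (-sbar₁ * q * v * p * v) * hw⟩
    · rw [hinv1]
      rw [show !![sbar₁ * (q * v), -b₁; -(p * u), (1:ℤ)] *
          (!![1, b₁; p * u, sbar₁ * (q * v)] * M * !![sbar₂ * (q * u), -b₂; -(p * v), 1]) *
          !![1, b₂; p * v, sbar₂ * (q * u)] =
          (!![sbar₁ * (q * v), -b₁; -(p * u), (1:ℤ)] * !![1, b₁; p * u, sbar₁ * (q * v)]) * M *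
          (!![sbar₂ * (q * u), -b₂; -(p * v), 1] * !![1, b₂; p * v, sbar₂ * (q * u)]) by
        noncomm_ring]
      rw [hinv2]
      rw [show (!![sbar₁ * (q * v), -b₁; -(p * u), (1:ℤ)] * !![1, b₁; p * u, sbar₁ * (q * v)]) = 1 by
        rw [Matrix.mul_fin_two]; ext i j; fin_cases i <;> fin_cases j <;> simp <;> linarith [h₁]]
      simp
end

section
/- Let p, q, u, v be pairwise coprime positive integers, N = pquv, r₁ = pu, s₁ = qv, r₂ = pv, s₂ = qu, and let σ_{1/r₁}, σ_{1/r₂} ∈ SL₂(ℝ) be the Atkin–Lehner scaling matrices of the cusps 1/r₁ and 1/r₂. Then a positive real number γ occurs as the lower-left entry of some element of σ_{1/r₁}⁻¹ · Γ₀(N) · σ_{1/r₂} if and only if γ = c·√(uv) for some positive integer c with pq ∣ c and gcd(c, uv) = 1. -/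
/-!
Write `σ_{1/r} = τ_r ν_s` with `τ_r ∈ SL₂(ℤ)`. Then `σ₁⁻¹ g σ₂ = ν_{s₁}⁻¹ M ν_{s₂}` with
`M = τ₁⁻¹ g τ₂ ∈ SL₂(ℤ)`, whose lower-left entry is `√(s₁ s₂) M₁₀ = q √(uv) M₁₀`.
For `g ∈ Γ₀(N)` one finds `p ∣ M₁₀`, `v ∣ M₀₀` and `u ∣ M₁₁`, so `det M = 1` makes `M₁₀` coprime
to `uv`. Conversely, for `c = pqk` with `uv x + pqk y = 1`, the matrix `M = !![v x, -q y; p k, u]`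
has determinant one and `g = τ₁ M τ₂⁻¹` lies in `Γ₀(N)`.
-/

open Matrix

theorem isCoprime_apply_one_zero_of_det_eq_one {R : Type*} [CommRing R]
    {M : Matrix (Fin 2) (Fin 2) R} (h : M.det = 1) : IsCoprime (M 1 0) (M 0 0 * M 1 1) :=
  ⟨-M 0 1, 1, by rw [det_fin_two] at h; linear_combination h⟩

theorem inv_mul_diagonal_apply_one_zero {K : Type*} [Field K]
    {T₁ T₂ X : Matrix (Fin 2) (Fin 2) K} (hT₁ : T₁.det = 1) {s t : K} (hs : s ≠ 0) :
    ((T₁ * !![s, 0; 0, s⁻¹])⁻¹ * X * (T₂ * !![t, 0; 0, t⁻¹])) 1 0 =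
      s * t * (T₁.adjugate * X * T₂) 1 0 := by
  have hD : (!![s, 0; 0, s⁻¹])⁻¹ = !![s⁻¹, 0; 0, s] :=
    inv_eq_left_inv (by rw [one_fin_two]; simp [hs])
  rw [Matrix.mul_inv_rev, hD, inv_def, hT₁, Ring.inverse_one, one_smul]
  simp only [mul_apply, Fin.sum_univ_two, of_apply, cons_val', cons_val_zero, cons_val_one,
    cons_val_fin_one]
  ring

theorem intCast_inv_mul_diagonal_apply_one_zero {τ₁ τ₂ g : Matrix (Fin 2) (Fin 2) ℤ}
    (hτ₁ : τ₁.det = 1) {s t : ℝ} (hs : s ≠ 0) :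
    (((τ₁.map (Int.cast : ℤ → ℝ) * !![s, 0; 0, s⁻¹])⁻¹ * g.map (Int.cast : ℤ → ℝ) *
      (τ₂.map (Int.cast : ℤ → ℝ) * !![t, 0; 0, t⁻¹])) 1 0 : ℝ) =
      s * t * (τ₁.adjugate * g * τ₂) 1 0 := by
  have hadj : (τ₁.map (Int.cast : ℤ → ℝ)).adjugate = τ₁.adjugate.map Int.cast :=
    ((Int.castRingHom ℝ).map_adjugate τ₁).symm
  rw [inv_mul_diagonal_apply_one_zero (by rw [← Int.cast_det, hτ₁, Int.cast_one]) hs, hadj]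
  simp only [mul_apply, map_apply, Fin.sum_univ_two, Int.cast_add, Int.cast_mul]

/-- The matrix `τ_r`, with `b` standing for the integer `(s̄ s - 1) / r`. -/
def atkinLehnerTau (r s sbar b : ℤ) : Matrix (Fin 2) (Fin 2) ℤ := !![1, b; r, sbar * s]

theorem det_atkinLehnerTau {r s sbar b : ℤ} (h : sbar * s - 1 = r * b) :
    (atkinLehnerTau r s sbar b).det = 1 := by
  rw [atkinLehnerTau, det_fin_two_of]
  linear_combination h

theorem atkinLehnerTau_map_intCast (r s sbar b : ℤ) :
    (atkinLehnerTau r s sbar b).map (Int.cast : ℤ → ℝ) =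
      !![(1 : ℝ), (b : ℝ); (r : ℝ), ((sbar * s : ℤ) : ℝ)] := by
  ext i j
  fin_cases i <;> fin_cases j <;> simp [atkinLehnerTau]

section Gamma0

variable {p q u v sbar₁ sbar₂ b₁ b₂ : ℤ}

theorem Gamma0_conj_lowerLeft_dvd_and_isCoprime
    (h₁ : sbar₁ * (q * v) - 1 = p * u * b₁) (h₂ : sbar₂ * (q * u) - 1 = p * v * b₂)
    {g : Matrix (Fin 2) (Fin 2) ℤ} (hg : g.det = 1) (hN : p * q * u * v ∣ g 1 0) :
    p ∣ ((atkinLehnerTau (p * u) (q * v) sbar₁ b₁).adjugate * g *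
        atkinLehnerTau (p * v) (q * u) sbar₂ b₂) 1 0 ∧
      IsCoprime (((atkinLehnerTau (p * u) (q * v) sbar₁ b₁).adjugate * g *
        atkinLehnerTau (p * v) (q * u) sbar₂ b₂) 1 0) (u * v) := by
  set M := (atkinLehnerTau (p * u) (q * v) sbar₁ b₁).adjugate * g *
    atkinLehnerTau (p * v) (q * u) sbar₂ b₂ with hM
  have hdet : M.det = 1 := by
    rw [hM, det_mul, det_mul, det_adjugate, det_atkinLehnerTau h₁, det_atkinLehnerTau h₂, hg]
    norm_num
  obtain ⟨n, hn⟩ := hN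
  have h00 : M 0 0 =
      v * (sbar₁ * q * (g 0 0 + p * v * g 0 1) - b₁ * (p * q * u * n + p * g 1 1)) := by
    simp only [hM, atkinLehnerTau, adjugate_fin_two_of, mul_apply, Fin.sum_univ_two, of_apply,
      cons_val', cons_val_zero, cons_val_one, cons_val_fin_one]
    linear_combination -b₁ * hn
  have h10 : M 1 0 = p * (q * u * v * n - u * g 0 0 - p * u * v * g 0 1 + v * g 1 1) := by
    simp only [hM, atkinLehnerTau, adjugate_fin_two_of, mul_apply, Fin.sum_univ_two, of_apply,
      cons_val', cons_val_zero, cons_val_one, cons_val_fin_one]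
    linear_combination hn
  have h11 : M 1 1 =
      u * (p * (q * v * n - g 0 0) * b₂ + (g 1 1 - p * u * g 0 1) * (sbar₂ * q)) := by
    simp only [hM, atkinLehnerTau, adjugate_fin_two_of, mul_apply, Fin.sum_univ_two, of_apply,
      cons_val', cons_val_zero, cons_val_one, cons_val_fin_one]
    linear_combination b₂ * hn
  refine ⟨⟨_, h10⟩, (isCoprime_apply_one_zero_of_det_eq_one hdet).of_isCoprime_of_dvd_right ?_⟩
  rw [h00, h11, mul_comm u v]
  exact mul_dvd_mul (dvd_mul_right _ _) (dvd_mul_right _ _)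

theorem exists_Gamma0_conj_lowerLeft_eq
    (h₁ : sbar₁ * (q * v) - 1 = p * u * b₁) (h₂ : sbar₂ * (q * u) - 1 = p * v * b₂)
    {c : ℤ} (hpq : p * q ∣ c) (hc : IsCoprime c (u * v)) :
    ∃ g : Matrix (Fin 2) (Fin 2) ℤ, g.det = 1 ∧ p * q * u * v ∣ g 1 0 ∧
      q * ((atkinLehnerTau (p * u) (q * v) sbar₁ b₁).adjugate * g *
        atkinLehnerTau (p * v) (q * u) sbar₂ b₂) 1 0 = c := by
  obtain ⟨k, rfl⟩ := hpq
  obtain ⟨x, y, hxy⟩ := hc.symm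
  set τ₁ := atkinLehnerTau (p * u) (q * v) sbar₁ b₁
  set τ₂ := atkinLehnerTau (p * v) (q * u) sbar₂ b₂
  set M : Matrix (Fin 2) (Fin 2) ℤ := !![v * x, -(q * y); p * k, u]
  have hτ₁ : τ₁.det = 1 := det_atkinLehnerTau h₁
  have hτ₂ : τ₂.det = 1 := det_atkinLehnerTau h₂
  refine ⟨τ₁ * M * τ₂.adjugate, ?_, ?_, ?_⟩
  · rw [det_mul, det_mul, det_adjugate, hτ₁, hτ₂, det_fin_two_of]
    linear_combination hxy
  · refine ⟨x * sbar₂ * u + p * y + sbar₁ * sbar₂ * q * k - sbar₁ * v, ?_⟩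
    simp only [τ₁, τ₂, M, atkinLehnerTau, adjugate_fin_two_of, mul_apply, Fin.sum_univ_two,
      of_apply, cons_val', cons_val_zero, cons_val_one, cons_val_fin_one]
    ring
  · have hconj : τ₁.adjugate * (τ₁ * M * τ₂.adjugate) * τ₂ = M := by
      rw [← Matrix.mul_assoc, ← Matrix.mul_assoc, adjugate_mul, hτ₁, one_smul, Matrix.one_mul,
        Matrix.mul_assoc, adjugate_mul, hτ₂, one_smul, Matrix.mul_one]
    rw [hconj]
    show q * (p * k) = p * q * k
    ring

end Gamma0

theorem stmt_1_general (p q u v : ℤ) (hq : 0 < q) (hv : 0 < v)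
    (hqu : IsCoprime q u) (hqv : IsCoprime q v)
    (sbar₁ sbar₂ b₁ b₂ : ℤ)
    (h₁ : sbar₁ * (q * v) - 1 = (p * u) * b₁)
    (h₂ : sbar₂ * (q * u) - 1 = (p * v) * b₂)
    (σ₁ σ₂ : Matrix (Fin 2) (Fin 2) ℝ)
    (hσ₁ : σ₁ = !![(1 : ℝ), (b₁ : ℝ); ((p * u : ℤ) : ℝ), ((sbar₁ * (q * v) : ℤ) : ℝ)] *
      !![Real.sqrt ((q * v : ℤ) : ℝ), 0; 0, (Real.sqrt ((q * v : ℤ) : ℝ))⁻¹])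
    (hσ₂ : σ₂ = !![(1 : ℝ), (b₂ : ℝ); ((p * v : ℤ) : ℝ), ((sbar₂ * (q * u) : ℤ) : ℝ)] *
      !![Real.sqrt ((q * u : ℤ) : ℝ), 0; 0, (Real.sqrt ((q * u : ℤ) : ℝ))⁻¹])
    (γ : ℝ) (hγ : 0 < γ) :
    (∃ g : Matrix (Fin 2) (Fin 2) ℤ, g.det = 1 ∧ (p * q * u * v) ∣ g 1 0 ∧
        (σ₁⁻¹ * g.map (Int.cast : ℤ → ℝ) * σ₂) 1 0 = γ) ↔
      ∃ c : ℤ, 0 < c ∧ (p * q) ∣ c ∧ IsCoprime c (u * v) ∧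
        γ = (c : ℝ) * Real.sqrt ((u * v : ℤ) : ℝ) := by
  have hs : Real.sqrt ((q * v : ℤ) : ℝ) ≠ 0 := (Real.sqrt_pos.2 (by positivity)).ne'
  have hst : Real.sqrt ((q * v : ℤ) : ℝ) * Real.sqrt ((q * u : ℤ) : ℝ) =
      q * Real.sqrt ((u * v : ℤ) : ℝ) := by
    push_cast
    rw [← Real.sqrt_mul (by positivity), show (q * v * (q * u) : ℝ) = q ^ 2 * (u * v) by ring,
      Real.sqrt_mul (by positivity), Real.sqrt_sq (by positivity)]
  have hentry (g : Matrix (Fin 2) (Fin 2) ℤ) : (σ₁⁻¹ * g.map (Int.cast : ℤ → ℝ) * σ₂) 1 0 =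
      ((q * ((atkinLehnerTau (p * u) (q * v) sbar₁ b₁).adjugate * g *
        atkinLehnerTau (p * v) (q * u) sbar₂ b₂) 1 0 : ℤ) : ℝ) * Real.sqrt ((u * v : ℤ) : ℝ) := by
    rw [hσ₁, hσ₂, ← atkinLehnerTau_map_intCast, ← atkinLehnerTau_map_intCast,
      intCast_inv_mul_diagonal_apply_one_zero (det_atkinLehnerTau h₁) hs, hst]
    push_cast
    ring
  constructor
  · rintro ⟨g, hg, hN, rfl⟩
    obtain ⟨hp, hcop⟩ := Gamma0_conj_lowerLeft_dvd_and_isCoprime h₁ h₂ hg hN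
    rw [hentry] at hγ ⊢
    refine ⟨_, ?_, mul_comm p q ▸ mul_dvd_mul_left q hp, (hqu.mul_right hqv).mul_left hcop, rfl⟩
    exact_mod_cast pos_of_mul_pos_left hγ (Real.sqrt_nonneg _)
  · rintro ⟨c, -, hpq, hc, rfl⟩
    obtain ⟨g, hg, hN, hgc⟩ := exists_Gamma0_conj_lowerLeft_eq h₁ h₂ hpq hc
    exact ⟨g, hg, hN, by rw [hentry, hgc]⟩

/-- **Allowed moduli for the pair of Atkin–Lehner cusps `1/r₁`, `1/r₂`**
(Equation (2.11) of the paper): a positive real `γ` occurs as the lower-left entry of an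
element of `σ_{1/r₁}⁻¹ Γ₀(N) σ_{1/r₂}` iff `γ = c√(uv)` with `pq ∣ c` and `(c, uv) = 1`. -/
theorem stmt_1 (p q u v : ℤ) (hp : 0 < p) (hq : 0 < q) (hu : 0 < u) (hv : 0 < v)
    (hpq : IsCoprime p q) (hpu : IsCoprime p u) (hpv : IsCoprime p v)
    (hqu : IsCoprime q u) (hqv : IsCoprime q v) (huv : IsCoprime u v)
    (sbar₁ sbar₂ b₁ b₂ : ℤ)
    (h₁ : sbar₁ * (q * v) - 1 = (p * u) * b₁)
    (h₂ : sbar₂ * (q * u) - 1 = (p * v) * b₂)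
    (σ₁ σ₂ : Matrix (Fin 2) (Fin 2) ℝ)
    (hσ₁ : σ₁ = !![(1 : ℝ), (b₁ : ℝ); ((p * u : ℤ) : ℝ), ((sbar₁ * (q * v) : ℤ) : ℝ)] *
      !![Real.sqrt ((q * v : ℤ) : ℝ), 0; 0, (Real.sqrt ((q * v : ℤ) : ℝ))⁻¹])
    (hσ₂ : σ₂ = !![(1 : ℝ), (b₂ : ℝ); ((p * v : ℤ) : ℝ), ((sbar₂ * (q * u) : ℤ) : ℝ)] *
      !![Real.sqrt ((q * u : ℤ) : ℝ), 0; 0, (Real.sqrt ((q * u : ℤ) : ℝ))⁻¹])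
    (γ : ℝ) (hγ : 0 < γ) :
    (∃ g : Matrix (Fin 2) (Fin 2) ℤ, g.det = 1 ∧ (p * q * u * v) ∣ g 1 0 ∧
        (σ₁⁻¹ * g.map (Int.cast : ℤ → ℝ) * σ₂) 1 0 = γ) ↔
      ∃ c : ℤ, 0 < c ∧ (p * q) ∣ c ∧ IsCoprime c (u * v) ∧
        γ = (c : ℝ) * Real.sqrt ((u * v : ℤ) : ℝ) :=
  stmt_1_general p q u v hq hv hqu hqv sbar₁ sbar₂ b₁ b₂ h₁ h₂ σ₁ σ₂ hσ₁ hσ₂ γ hγ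
end

section
/- Let p, q, u, v be pairwise coprime positive integers, N = pquv, r₁ = pu, s₁ = qv, r₂ = pv, s₂ = qu, and let τ_{r₁}, τ_{r₂} ∈ SL₂(ℤ) be as follows: τ_{rᵢ} = [[1, (s̄ᵢ sᵢ − 1)/rᵢ], [rᵢ, s̄ᵢ sᵢ]] where sᵢ s̄ᵢ ≡ 1 (mod rᵢ). Let x, y, z, w be integers such that M = [[xv, yq], [zp, wu]] ∈ SL₂(ℤ). Then γ = τ_{r₁} · M · τ_{r₂}⁻¹ lies in Γ₀(N), and its lower-right entry d satisfies the congruences: d ≡ wu (mod p), d ≡ ux (mod q), d·v ≡ z (mod u), and d·z ≡ −u (mod v). -/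
open Matrix

/-- **Lower-right entry of the `Γ₀(N)`-element attached to a double coset representative**
(part of the proof of Theorem 2.8 of the paper): for `M = !![xv, yq; zp, wu] ∈ SL₂(ℤ)`,
the matrix `γ = τ_{r₁} M τ_{r₂}⁻¹` lies in `Γ₀(N)` and its lower-right entry `d` satisfies
`d ≡ wu (mod p)`, `d ≡ ux (mod q)`, `dv ≡ z (mod u)`, `dz ≡ -u (mod v)`. -/
theorem stmt_2 (p q u v : ℤ) (hp : 0 < p) (hq : 0 < q) (hu : 0 < u) (hv : 0 < v)
    (hpq : IsCoprime p q) (hpu : IsCoprime p u) (hpv : IsCoprime p v)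
    (hqu : IsCoprime q u) (hqv : IsCoprime q v) (huv : IsCoprime u v)
    (sbar₁ sbar₂ b₁ b₂ : ℤ)
    (h₁ : sbar₁ * (q * v) - 1 = (p * u) * b₁)
    (h₂ : sbar₂ * (q * u) - 1 = (p * v) * b₂)
    (x y z w : ℤ) (M : Matrix (Fin 2) (Fin 2) ℤ)
    (hM : M = !![x * v, y * q; z * p, w * u]) (hMdet : M.det = 1)
    (γ : Matrix (Fin 2) (Fin 2) ℤ)
    (hγ : γ = !![1, b₁; p * u, sbar₁ * (q * v)] * M *
      (!![1, b₂; p * v, sbar₂ * (q * u)])⁻¹) :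
    γ.det = 1 ∧ (p * q * u * v) ∣ γ 1 0 ∧
      γ 1 1 ≡ w * u [ZMOD p] ∧
      γ 1 1 ≡ u * x [ZMOD q] ∧
      γ 1 1 * v ≡ z [ZMOD u] ∧
      γ 1 1 * z ≡ -u [ZMOD v] := by
  have hMd : x * v * (w * u) - y * q * (z * p) = 1 := by
    rw [hM, Matrix.det_fin_two_of] at hMdet
    linear_combination hMdet
  have hBinv : (!![1, b₂; p * v, sbar₂ * (q * u)])⁻¹ =
      !![sbar₂ * (q * u), -b₂; -(p * v), 1] := by
    apply Matrix.inv_eq_right_inv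
    ext i j
    fin_cases i <;> fin_cases j <;>
      simp [Matrix.mul_apply, Fin.sum_univ_two] <;> first
        | linear_combination h₂
        | linear_combination -h₂
        | ring
  have hγ' : γ = !![(x * v + b₁ * (z * p)) * (sbar₂ * (q * u)) + (y * q + b₁ * (w * u)) * (-(p * v)),
      (x * v + b₁ * (z * p)) * (-b₂) + (y * q + b₁ * (w * u));
      (p * u * (x * v) + sbar₁ * (q * v) * (z * p)) * (sbar₂ * (q * u)) + (p * u * (y * q) + sbar₁ * (q * v) * (w * u)) * (-(p * v)),
      (p * u * (x * v) + sbar₁ * (q * v) * (z * p)) * (-b₂) + (p * u * (y * q) + sbar₁ * (q * v) * (w * u))] := by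
    rw [hγ, hBinv, hM]
    ext i j
    fin_cases i <;> fin_cases j <;>
      simp [Matrix.mul_apply, Fin.sum_univ_two] <;> ring
  have h10 : γ 1 0 = (p * u * (x * v) + sbar₁ * (q * v) * (z * p)) * (sbar₂ * (q * u)) + (p * u * (y * q) + sbar₁ * (q * v) * (w * u)) * (-(p * v)) := by
    rw [hγ']; simp
  have h11 : γ 1 1 = (p * u * (x * v) + sbar₁ * (q * v) * (z * p)) * (-b₂) + (p * u * (y * q) + sbar₁ * (q * v) * (w * u)) := by
    rw [hγ']; simp
  refine ⟨?_, ?_, ?_, ?_, ?_, ?_⟩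
  · rw [hγ, hBinv, Matrix.det_mul, Matrix.det_mul, hMdet,
      Matrix.det_fin_two_of, Matrix.det_fin_two_of]
    linear_combination (sbar₂ * (q * u) - p * v * b₂) * h₁ + h₂
  · rw [h10]
    exact ⟨-(v * sbar₁ * w) + u * sbar₂ * x + q * sbar₁ * sbar₂ * z - p * y, by ring⟩
  · rw [Int.modEq_iff_dvd, h11]
    exact ⟨-(u^2 * w * b₁) + u * v * b₂ * x + q * v * sbar₁ * b₂ * z - q * u * y,
      by linear_combination (-(u * w)) * h₁⟩
  · rw [Int.modEq_iff_dvd, h11]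
    exact ⟨sbar₂ * u^2 * x - u * v * sbar₁ * w + p * v * sbar₁ * b₂ * z - p * u * y,
      by linear_combination (-(u * x)) * h₂⟩
  · rw [Int.modEq_iff_dvd, h11]
    exact ⟨z * (sbar₂ * q + sbar₂ * q * p * u * b₁ - p * b₁) - q * v^2 * sbar₁ * w + p * v^2 * b₂ * x - p * q * v * y,
      by linear_combination (z * p * v * b₂) * h₁ - z * (1 + p * u * b₁) * h₂⟩
  · rw [Int.modEq_iff_dvd, h11]
    exact ⟨-(x * w * u^2) - q * u * sbar₁ * w * z + p * u * b₂ * x * z + p * q * sbar₁ * b₂ * z^2,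
      by linear_combination u * hMd⟩
end

section
/- Let p, q, u, v be pairwise coprime positive integers, N = pquv, r₁ = pu, s₁ = qv, r₂ = pv, s₂ = qu, and let σ_{1/r₁}, σ_{1/r₂} ∈ SL₂(ℝ) be the Atkin–Lehner scaling matrices of 1/r₁ and 1/r₂. Let χ be an even Dirichlet character modulo N factored as χ = χ_p χ_q χ_u χ_v, where χ_p, χ_q, χ_u, χ_v are Dirichlet characters modulo p, q, u, v respectively. Let m, n be integers, let c be a positive integer with pq ∣ c and gcd(c, uv) = 1, and set γ₀ = c·√(uv). Let D be the set of elements M of σ_{1/r₁}⁻¹ · Γ₀(N) · σ_{1/r₂} with M₂₁ = γ₀, M₁₁ ∈ [0, γ₀) and M₂₂ ∈ [0, γ₀); for M ∈ D the matrix σ_{1/r₁} M σ_{1/r₂}⁻¹ lies in Γ₀(N) and has an integer lower-right entry d_M. Then ∑_{M ∈ D} conj(χ(d_M)) · e((M₁₁·m + M₂₂·n)/γ₀) = 𝔣 · conj(χ_u(c)) · χ_v(c) · ∑_{a,d mod c, ad ≡ 1 (mod c)} conj(χ_p(d)) · conj(χ_q(a)) · e((a·t·m + d·n)/c), where t is any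 integer with t·uv ≡ 1 (mod c), and 𝔣 = χ_v(−1) · conj(χ_p(u)) · conj(χ_v(u)) · χ_q(v) · χ_u(v) · χ_u(pq) · conj(χ_v(pq)). -/
/-!
Write `σ_{1/r} = τ_r ν_s` with `τ_r ∈ SL₂(ℤ)` and `ν_s = diag(√s, 1/√s)`. Then
`σ_{1/pu}⁻¹ g σ_{1/pv} = ν_{qv}⁻¹ h ν_{qu}` with `h = τ_{pu}⁻¹ g τ_{pv}`, and `g ∈ Γ₀(pquv)` exactly
when `v, q, p, u` divide the entries `h₁₁, h₁₂, h₂₁, h₂₂` of `h`. Fixing the lower-left entry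
`c√(uv)` and the ranges of the diagonal, the index set consists of the matrices
`[[α√(uv), β/√(uv)], [c√(uv), δ√(uv)]]` with `0 ≤ α, δ < c` and `uvαδ - cβ = 1`, and
`a ↦ (a t mod c, a⁻¹ mod c)` parametrises these pairs `(α, δ)` by the units `a` modulo `c`.
The lower-right entry `d` of the corresponding element of `Γ₀(pquv)` satisfies `d ≡ u a⁻¹ (p)`,
`v d ≡ a (q)`, `pqv d ≡ c (u)` and `c d ≡ -pqu (v)`, which splits `χ̄(d)` into the local factors
of the right-hand side, while the exponential only sees `α` modulo `c`.
-/

open Matrix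

/-- `e x = exp(2πix)`. -/
noncomputable def eFun (x : ℝ) : ℂ := Complex.exp (2 * Real.pi * Complex.I * x)

lemma eFun_add_intCast (x : ℝ) (k : ℤ) : eFun (x + k) = eFun x := by
  have h : (2 * Real.pi * Complex.I * ((x + k : ℝ) : ℂ)) =
      2 * Real.pi * Complex.I * x + k * (2 * Real.pi * Complex.I) := by
    push_cast; ring
  rw [eFun, h, Complex.exp_add, Complex.exp_int_mul_two_pi_mul_I, mul_one, eFun]

lemma eFun_intCast_div_eq_of_modEq {c x y : ℤ} (hc : c ≠ 0) (h : x ≡ y [ZMOD c]) :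
    eFun (x / c) = eFun (y / c) := by
  obtain ⟨k, hk⟩ := Int.modEq_iff_dvd.1 h.symm
  have hx : (x : ℝ) = y + c * k := by exact_mod_cast (by linarith : x = y + c * k)
  have : (x / c : ℝ) = y / c + k := by
    rw [hx]; field_simp
  rw [this, eFun_add_intCast]

namespace DirichletCharacter

variable {n : ℕ} (ψ : DirichletCharacter ℂ n)

lemma apply_mul_conj_apply {x : ZMod n} (hx : IsUnit x) :
    ψ x * (starRingEnd ℂ) (ψ x) = 1 := by
  rw [← RCLike.star_def, MulChar.star_apply', ← MulChar.mul_apply, mul_inv_cancel,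
    MulChar.one_apply hx]

lemma conj_apply_eq_of_mul_eq {x y z : ZMod n} (hx : IsUnit x) (h : x * y = z) :
    (starRingEnd ℂ) (ψ y) = ψ x * (starRingEnd ℂ) (ψ z) := by
  rw [← h, map_mul, map_mul, ← mul_assoc, apply_mul_conj_apply ψ hx, one_mul]

lemma conj_apply_neg_one : (starRingEnd ℂ) (ψ (-1)) = ψ (-1) := by
  rcases ψ.even_or_odd with (h : ψ (-1) = 1) | (h : ψ (-1) = -1) <;> simp [h]

end DirichletCharacter

open DirichletCharacter in
theorem conj_apply_eq_of_congr {p q u v : ℕ} (hpu : p.Coprime u) (hqu : q.Coprime u)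
    (hqv : q.Coprime v) (huv : u.Coprime v)
    (χ : DirichletCharacter ℂ (p * q * u * v)) (χp : DirichletCharacter ℂ p)
    (χq : DirichletCharacter ℂ q) (χu : DirichletCharacter ℂ u) (χv : DirichletCharacter ℂ v)
    (hfact : ∀ x : ℤ, χ x = χp x * χq x * χu x * χv x) {z : ℤ} {a c d : ℕ} (hcv : c.Coprime v)
    (hzp : (z : ZMod p) = u * d) (hzq : v * (z : ZMod q) = a)
    (hzu : p * q * v * (z : ZMod u) = c) (hzv : c * (z : ZMod v) = -(p * q * u)) :
    (starRingEnd ℂ) (χ z) =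
      χv (-1) * (starRingEnd ℂ) (χp u) * (starRingEnd ℂ) (χv u) * χq v * χu v *
        χu ((p * q : ℕ) : ZMod u) * (starRingEnd ℂ) (χv ((p * q : ℕ) : ZMod v)) *
        (starRingEnd ℂ) (χu c) * χv c * ((starRingEnd ℂ) (χp d) * (starRingEnd ℂ) (χq a)) := by
  have hp : (starRingEnd ℂ) (χp z) = (starRingEnd ℂ) (χp u) * (starRingEnd ℂ) (χp d) := by
    rw [hzp, map_mul, map_mul]
  have hq : (starRingEnd ℂ) (χq z) = χq v * (starRingEnd ℂ) (χq a) :=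
    χq.conj_apply_eq_of_mul_eq ((ZMod.isUnit_iff_coprime v q).2 hqv.symm) hzq
  rw [show (p * q * v : ZMod u) = ((p * q : ℕ) : ZMod u) * v by push_cast; ring] at hzu
  have hu : (starRingEnd ℂ) (χu z) = χu ((p * q : ℕ) : ZMod u) * χu v * (starRingEnd ℂ) (χu c) := by
    rw [← map_mul]
    refine χu.conj_apply_eq_of_mul_eq ?_ hzu
    exact_mod_cast (ZMod.isUnit_iff_coprime (p * q * v) u).2 ((hpu.mul_left hqu).mul_left huv.symm)
  rw [show -(p * q * u : ZMod v) = -1 * ((p * q : ℕ) : ZMod v) * u by push_cast; ring] at hzv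
  have hv : (starRingEnd ℂ) (χv z) = χv c * (starRingEnd ℂ) (χv (-1 * (p * q : ℕ) * u)) :=
    χv.conj_apply_eq_of_mul_eq ((ZMod.isUnit_iff_coprime c v).2 hcv) hzv
  rw [hfact, map_mul, map_mul, map_mul, hp, hq, hu, hv]
  simp only [map_mul, conj_apply_neg_one]
  ring

def unitParam (c : ℕ) (t : ℤ) (a : ℕ) : ℤ × ℤ := ((a * t) % c, ((a : ZMod c)⁻¹).val)

def unitPairs (c : ℕ) (k : ℤ) : Set (ℤ × ℤ) :=
  {x | x.1 ∈ Set.Ico 0 (c : ℤ) ∧ x.2 ∈ Set.Ico 0 (c : ℤ) ∧ k * x.1 * x.2 ≡ 1 [ZMOD c]}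

section UnitParam

variable {c : ℕ} {k t : ℤ}

lemma ZMod.val_intCast_of_mem_Ico [NeZero c] {x : ℤ} (hx : x ∈ Set.Ico 0 (c : ℤ)) :
    ((x : ZMod c).val : ℤ) = x := by
  rw [ZMod.val_intCast, Int.emod_eq_of_lt hx.1 hx.2]

lemma injOn_unitParam (ht : t * k ≡ 1 [ZMOD c]) :
    Set.InjOn (unitParam c t) ((Finset.range c).filter (fun a => Nat.gcd a c = 1)) := by
  intro a ha b hb hab
  have htk : (t : ZMod c) * k = 1 := by exact_mod_cast (ZMod.intCast_eq_intCast_iff _ _ _).2 ht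
  have h : ((a * t : ℤ) : ZMod c) = ((b * t : ℤ) : ZMod c) :=
    (ZMod.intCast_eq_intCast_iff _ _ _).2 (congrArg Prod.fst hab)
  have hab' : (a : ZMod c) = b := by
    push_cast at h
    linear_combination (k : ZMod c) * h + ((b : ZMod c) - a) * htk
  simp only [Finset.coe_filter, Finset.mem_range, Set.mem_ofPred_eq] at ha hb
  rw [← ZMod.val_cast_of_lt ha.1, ← ZMod.val_cast_of_lt hb.1, hab']

lemma unitPairs_eq_image_unitParam [NeZero c] (ht : t * k ≡ 1 [ZMOD c]) :
    unitPairs c k = unitParam c t '' ((Finset.range c).filter (fun a => Nat.gcd a c = 1)) := by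
  have htk : (t : ZMod c) * k = 1 := by exact_mod_cast (ZMod.intCast_eq_intCast_iff _ _ _).2 ht
  ext ⟨α, δ⟩
  simp only [unitPairs, unitParam, Set.mem_ofPred_eq, Set.mem_image, Finset.coe_filter,
    Finset.mem_range, Prod.mk.injEq, ← ZMod.intCast_eq_intCast_iff, ← ZMod.val_intCast]
  constructor
  · rintro ⟨hα, hδ, hkαδ⟩
    push_cast at hkαδ
    set a := ((k * α : ℤ) : ZMod c).val
    have ha : (a : ZMod c) = k * α := by simp [a]
    refine ⟨a, ⟨ZMod.val_lt _, ?_⟩, ?_, ?_⟩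
    · rw [← Nat.Coprime, ← ZMod.isUnit_iff_coprime, ha]
      exact IsUnit.of_mul_eq_one _ hkαδ
    · rw [← ZMod.val_intCast_of_mem_Ico hα]
      congr 2
      push_cast
      rw [ha]
      linear_combination (α : ZMod c) * htk
    · rw [ZMod.inv_eq_of_mul_eq_one _ _ (δ : ZMod c) (by rw [ha, hkαδ]),
        ZMod.val_intCast_of_mem_Ico hδ]
  · rintro ⟨a, ⟨-, hac⟩, rfl, rfl⟩
    have hunit := ZMod.coe_mul_inv_eq_one a hac
    refine ⟨⟨by positivity, by exact_mod_cast ZMod.val_lt _⟩,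
      ⟨by positivity, by exact_mod_cast ZMod.val_lt _⟩, ?_⟩
    push_cast
    simp only [ZMod.natCast_val, ZMod.cast_id', id]
    linear_combination (a : ZMod c) * (a : ZMod c)⁻¹ * htk + hunit

end UnitParam

/-- `τ_r` of the paper, with `b = (s̄ s - 1) / r`. -/
def tauMat (r s sbar b : ℤ) : Matrix (Fin 2) (Fin 2) ℤ := !![1, b; r, sbar * s]

noncomputable def scaleMat (w : ℝ) : Matrix (Fin 2) (Fin 2) ℝ := !![w, 0; 0, w⁻¹]

/-- `σ_{1/r} = τ_r ν_s`. -/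
noncomputable def scalingMat (r s sbar b : ℤ) : Matrix (Fin 2) (Fin 2) ℝ :=
  (tauMat r s sbar b).map Int.cast * scaleMat √s

lemma scalingMat_natCast (r s : ℕ) (sbar b : ℤ) :
    scalingMat r s sbar b = !![(1 : ℝ), (b : ℝ); (r : ℝ), ((sbar * (s : ℤ) : ℤ) : ℝ)] *
      !![√(s : ℝ), 0; 0, (√(s : ℝ))⁻¹] := by
  rw [scalingMat, scaleMat, Int.cast_natCast]
  congr 1
  ext i j; fin_cases i <;> fin_cases j <;> simp [tauMat]

lemma det_tauMat {r s sbar b : ℤ} (h : sbar * s - 1 = r * b) : (tauMat r s sbar b).det = 1 := by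
  rw [tauMat, det_fin_two_of]; linear_combination h

lemma adjugate_tauMat_mul {r s sbar b : ℤ} (h : sbar * s - 1 = r * b)
    (g : Matrix (Fin 2) (Fin 2) ℤ) :
    (tauMat r s sbar b).adjugate * (tauMat r s sbar b * g) = g := by
  rw [← Matrix.mul_assoc, adjugate_mul, det_tauMat h, one_smul, Matrix.one_mul]

lemma det_scaleMat {w : ℝ} (hw : w ≠ 0) : (scaleMat w).det = 1 := by
  simp [scaleMat, det_fin_two_of, hw]

lemma isUnit_det_scalingMat {r s sbar b : ℤ} (h : sbar * s - 1 = r * b) (hs : 0 < s) :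
    IsUnit (scalingMat r s sbar b).det := by
  rw [scalingMat, det_mul, det_scaleMat (by positivity), mul_one, ← Int.cast_det, det_tauMat h,
    Int.cast_one]
  exact isUnit_one

lemma inv_scaleMat_mul_mul_scaleMat {w₁ w₂ : ℝ} (hw₁ : w₁ ≠ 0)
    (X : Matrix (Fin 2) (Fin 2) ℝ) :
    (scaleMat w₁)⁻¹ * X * scaleMat w₂ =
      !![X 0 0 * (w₂ / w₁), X 0 1 / (w₁ * w₂); X 1 0 * (w₁ * w₂), X 1 1 * (w₁ / w₂)] := by
  rw [inv_def, det_scaleMat hw₁, Ring.inverse_one, one_smul, scaleMat, scaleMat,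
    adjugate_fin_two_of, eta_fin_two X]
  ext i j; fin_cases i <;> fin_cases j <;> simp <;> ring

lemma mul_nonsing_inv_mul_mul_nonsing_inv {n R : Type*} [Fintype n] [DecidableEq n] [CommRing R]
    {A B : Matrix n n R} (hA : IsUnit A.det) (hB : IsUnit B.det) (X : Matrix n n R) :
    A * (A⁻¹ * X * B) * B⁻¹ = X := by
  rw [Matrix.mul_assoc, Matrix.mul_assoc, mul_nonsing_inv _ hB, Matrix.mul_one,
    mul_nonsing_inv_cancel_left _ _ hA]

lemma map_adjugate_eq_inv {τ : Matrix (Fin 2) (Fin 2) ℤ} (hτ : τ.det = 1) :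
    τ.adjugate.map (Int.cast : ℤ → ℝ) = (τ.map Int.cast)⁻¹ := by
  rw [inv_def, ← Int.cast_det, hτ, Int.cast_one, Ring.inverse_one, one_smul]
  exact (Int.castRingHom ℝ).map_adjugate τ

lemma inv_map_mul_scaleMat_mul {τ₁ τ₂ : Matrix (Fin 2) (Fin 2) ℤ} (hτ₁ : τ₁.det = 1) {w₁ w₂ : ℝ}
    (g : Matrix (Fin 2) (Fin 2) ℤ) :
    (τ₁.map Int.cast * scaleMat w₁)⁻¹ * g.map Int.cast * (τ₂.map Int.cast * scaleMat w₂) =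
      (scaleMat w₁)⁻¹ * (τ₁.adjugate * g * τ₂).map (Int.cast : ℤ → ℝ) * scaleMat w₂ := by
  have hmap (A B : Matrix (Fin 2) (Fin 2) ℤ) :
      (A * B).map (Int.cast : ℤ → ℝ) = A.map Int.cast * B.map Int.cast :=
    Matrix.map_mul (f := Int.castRingHom ℝ)
  rw [Matrix.mul_inv_rev, ← map_adjugate_eq_inv hτ₁, hmap, hmap]
  simp only [Matrix.mul_assoc]

lemma sqrt_mul_mul_sqrt_mul {x y z : ℝ} (hx : 0 ≤ x) (hy : 0 ≤ y) :
    √(x * y) * √(x * z) = x * √(y * z) := by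
  rw [← Real.sqrt_mul (mul_nonneg hx hy), show x * y * (x * z) = x ^ 2 * (y * z) by ring,
    Real.sqrt_mul (sq_nonneg x), Real.sqrt_sq hx]

lemma inv_scaleMat_mul_map_mul_scaleMat {q u v : ℕ} (hq : 0 < q) (hu : 0 < u) (hv : 0 < v)
    (h : Matrix (Fin 2) (Fin 2) ℤ) :
    (scaleMat √(q * v))⁻¹ * h.map Int.cast * scaleMat √(q * u) =
      !![h 0 0 * √(u * v) / v, h 0 1 / (q * √(u * v));
        h 1 0 * (q * √(u * v)), h 1 1 * √(u * v) / u] := by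
  have hq' : (0 : ℝ) ≤ q := q.cast_nonneg
  have hu' : (0 : ℝ) ≤ u := u.cast_nonneg
  have hv' : (0 : ℝ) ≤ v := v.cast_nonneg
  have hqv : √(q * v) ≠ 0 := by positivity
  have hqu : √(q * u) ≠ 0 := by positivity
  have e₁ : √(q * v) * √(q * u) = q * √(u * v) := by
    rw [sqrt_mul_mul_sqrt_mul hq' hv', mul_comm (v : ℝ)]
  have e₂ : √(q * u) / √(q * v) = √(u * v) / v := by
    rw [div_eq_div_iff hqv (by positivity), mul_comm (u : ℝ), mul_comm (q : ℝ) v,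
      sqrt_mul_mul_sqrt_mul hv' hu', mul_comm (u : ℝ), mul_comm (v : ℝ)]
  have e₃ : √(q * v) / √(q * u) = √(u * v) / u := by
    rw [div_eq_div_iff hqu (by positivity), mul_comm (q : ℝ) u, sqrt_mul_mul_sqrt_mul hu' hv',
      mul_comm (v : ℝ), mul_comm (u : ℝ)]
  rw [inv_scaleMat_mul_mul_scaleMat hqv, e₁, e₂, e₃]
  ext i j; fin_cases i <;> fin_cases j <;> simp <;> ring

/-- The upper-right entry is `β / W` for the `β` with `k α δ - c β = 1`: the integer division is
exact on `unitPairs c k`. -/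
noncomputable def sliceMat (c k : ℤ) (W : ℝ) (x : ℤ × ℤ) : Matrix (Fin 2) (Fin 2) ℝ :=
  !![x.1 * W, ((k * x.1 * x.2 - 1) / c : ℤ) / W; c * W, x.2 * W]

lemma sliceMat_injective {c k : ℤ} {W : ℝ} (hW : W ≠ 0) : Function.Injective (sliceMat c k W) := by
  intro x y hxy
  have h₀ := congrFun (congrFun hxy 0) 0
  have h₁ := congrFun (congrFun hxy 1) 1
  simp only [sliceMat, of_apply, cons_val', cons_val_zero, cons_val_one, empty_val',
    cons_val_fin_one, mul_left_inj' hW, Int.cast_inj] at h₀ h₁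
  exact Prod.ext h₀ h₁

lemma mul_mem_Ico_mul_iff {x : ℤ} {c : ℕ} {W : ℝ} (hW : 0 < W) :
    (x : ℝ) * W ∈ Set.Ico 0 (c * W) ↔ x ∈ Set.Ico 0 (c : ℤ) := by
  simp only [Set.mem_Ico, mul_nonneg_iff_of_pos_right hW, mul_lt_mul_iff_of_pos_right hW]
  norm_cast

lemma eFun_sliceMat {c : ℕ} (hc : 0 < c) {k t : ℤ} {W : ℝ} (hW : W ≠ 0) (m n : ℤ) (a : ℕ) :
    eFun ((sliceMat c k W (unitParam c t a) 0 0 * m + sliceMat c k W (unitParam c t a) 1 1 * n) /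
        (c * W)) =
      eFun (((a * t * m + ((a : ZMod c)⁻¹).val * n : ℤ) : ℝ) / c) := by
  have h : ((a * t % c * m + ((a : ZMod c)⁻¹).val * n : ℤ) : ℝ) / (c : ℤ) =
      (sliceMat c k W (unitParam c t a) 0 0 * m + sliceMat c k W (unitParam c t a) 1 1 * n) /
        (c * W) := by
    simp only [sliceMat, unitParam, of_apply, cons_val', cons_val_zero, cons_val_one, empty_val',
      cons_val_fin_one]
    push_cast
    field_simp
  rw [← h, eFun_intCast_div_eq_of_modEq (by positivity)
    (((Int.mod_modEq _ _).mul_right _).add_right _), Int.cast_natCast]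

lemma IsCoprime.dvd_mul_add_mul_iff {m k y z : ℤ} (hmk : IsCoprime m k) :
    m ∣ k * y + m * z ↔ m ∣ y :=
  (dvd_add_left (dvd_mul_right m z)).trans ⟨hmk.dvd_of_dvd_mul_left, fun h => h.mul_left k⟩

lemma natCast_mul_mul_mul_dvd_iff {p q u v : ℕ} (hpq : p.Coprime q) (hpu : p.Coprime u)
    (hpv : p.Coprime v) (hqu : q.Coprime u) (hqv : q.Coprime v) (huv : u.Coprime v) {x : ℤ} :
    ((p * q * u * v : ℕ) : ℤ) ∣ x ↔ (p : ℤ) ∣ x ∧ (q : ℤ) ∣ x ∧ (u : ℤ) ∣ x ∧ (v : ℤ) ∣ x := by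
  push_cast
  constructor
  · intro hN
    exact ⟨dvd_trans ⟨q * u * v, by ring⟩ hN, dvd_trans ⟨p * u * v, by ring⟩ hN,
      dvd_trans ⟨p * q * v, by ring⟩ hN, dvd_trans ⟨p * q * u, by ring⟩ hN⟩
  · rintro ⟨hp, hq, hu, hv⟩
    have hpq_u : IsCoprime ((p : ℤ) * q) u := hpu.isCoprime.mul_left hqu.isCoprime
    have hpqu_v : IsCoprime ((p : ℤ) * q * u) v :=
      (hpv.isCoprime.mul_left hqv.isCoprime).mul_left huv.isCoprime
    exact hpqu_v.mul_dvd (hpq_u.mul_dvd (hpq.isCoprime.mul_dvd hp hq) hu) hv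

section AtkinLehner

variable {p q u v : ℕ} {sbar₁ sbar₂ b₁ b₂ : ℤ}

theorem dvd_lowerLeft_iff (hpq : p.Coprime q) (hpu : p.Coprime u) (hpv : p.Coprime v)
    (hqu : q.Coprime u) (hqv : q.Coprime v) (huv : u.Coprime v)
    (h₁ : sbar₁ * (q * v) - 1 = p * u * b₁) (h₂ : sbar₂ * (q * u) - 1 = p * v * b₂)
    (h : Matrix (Fin 2) (Fin 2) ℤ) :
    ((p * q * u * v : ℕ) : ℤ) ∣
        (tauMat (p * u) (q * v) sbar₁ b₁ * h * (tauMat (p * v) (q * u) sbar₂ b₂).adjugate) 1 0 ↔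
      (v : ℤ) ∣ h 0 0 ∧ (q : ℤ) ∣ h 0 1 ∧ (p : ℤ) ∣ h 1 0 ∧ (u : ℤ) ∣ h 1 1 := by
  have hs₁p : IsCoprime (p : ℤ) sbar₁ := ⟨-u * b₁, q * v, by linear_combination h₁⟩
  have hs₁u : IsCoprime (u : ℤ) sbar₁ := ⟨-p * b₁, q * v, by linear_combination h₁⟩
  have hs₂p : IsCoprime (p : ℤ) sbar₂ := ⟨-v * b₂, q * u, by linear_combination h₂⟩
  have hs₂v : IsCoprime (v : ℤ) sbar₂ := ⟨-p * b₂, q * u, by linear_combination h₂⟩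
  set x := (tauMat (p * u) (q * v) sbar₁ b₁ * h * (tauMat (p * v) (q * u) sbar₂ b₂).adjugate) 1 0
  have hx : x = (p * u * h 0 0 + sbar₁ * (q * v) * h 1 0) * (sbar₂ * (q * u))
      - (p * u * h 0 1 + sbar₁ * (q * v) * h 1 1) * (p * v) := by
    simp [x, tauMat, adjugate_fin_two, mul_apply, Fin.sum_univ_two]; ring
  -- modulo each of `v, q, p, u` a single entry of `h` survives in `x`, with a unit coefficient
  have hdv : (v : ℤ) ∣ x ↔ (v : ℤ) ∣ h 0 0 := by
    rw [show x = p * (u * (q * (u * sbar₂))) * h 0 0 + v * (sbar₁ * q * h 1 0 * sbar₂ * q * u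
      - p * u * h 0 1 * p - sbar₁ * q * h 1 1 * p * v) by rw [hx]; ring]
    exact (hpv.symm.isCoprime.mul_right (huv.symm.isCoprime.mul_right
      (hqv.symm.isCoprime.mul_right (huv.symm.isCoprime.mul_right hs₂v)))).dvd_mul_add_mul_iff
  have hdq : (q : ℤ) ∣ x ↔ (q : ℤ) ∣ h 0 1 := by
    rw [show x = -(p * (u * (p * v))) * h 0 1 + q * (p * u * h 0 0 * sbar₂ * u
      + sbar₁ * v * h 1 0 * sbar₂ * q * u - sbar₁ * v * h 1 1 * p * v) by rw [hx]; ring]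
    exact (hpq.symm.isCoprime.mul_right (hqu.isCoprime.mul_right
      (hpq.symm.isCoprime.mul_right hqv.isCoprime))).neg_right.dvd_mul_add_mul_iff
  have hdp : (p : ℤ) ∣ x ↔ (p : ℤ) ∣ h 1 0 := by
    rw [show x = sbar₁ * (q * (v * (sbar₂ * (q * u)))) * h 1 0 + p * (u * h 0 0 * sbar₂ * q * u
      - u * h 0 1 * p * v - sbar₁ * q * v * h 1 1 * v) by rw [hx]; ring]
    exact (hs₁p.mul_right (hpq.isCoprime.mul_right (hpv.isCoprime.mul_right
      (hs₂p.mul_right (hpq.isCoprime.mul_right hpu.isCoprime))))).dvd_mul_add_mul_iff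
  have hdu : (u : ℤ) ∣ x ↔ (u : ℤ) ∣ h 1 1 := by
    rw [show x = -(sbar₁ * (q * (v * (p * v)))) * h 1 1 + u * (p * h 0 0 * sbar₂ * q * u
      + sbar₁ * q * v * h 1 0 * sbar₂ * q - p * h 0 1 * p * v) by rw [hx]; ring]
    exact (hs₁u.mul_right (hqu.symm.isCoprime.mul_right (huv.isCoprime.mul_right
      (hpu.symm.isCoprime.mul_right huv.isCoprime)))).neg_right.dvd_mul_add_mul_iff
  rw [natCast_mul_mul_mul_dvd_iff hpq hpu hpv hqu hqv huv, hdv, hdq, hdp, hdu]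
  tauto

lemma inv_scalingMat_mul_map_mul_scalingMat (hq : 0 < q) (hu : 0 < u) (hv : 0 < v)
    (h₁ : sbar₁ * (q * v) - 1 = p * u * b₁) (h₂ : sbar₂ * (q * u) - 1 = p * v * b₂)
    (h : Matrix (Fin 2) (Fin 2) ℤ) :
    (scalingMat (p * u) (q * v) sbar₁ b₁)⁻¹ *
        (tauMat (p * u) (q * v) sbar₁ b₁ * h * (tauMat (p * v) (q * u) sbar₂ b₂).adjugate).map
          Int.cast * scalingMat (p * v) (q * u) sbar₂ b₂ =
      !![h 0 0 * √(u * v) / v, h 0 1 / (q * √(u * v));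
        h 1 0 * (q * √(u * v)), h 1 1 * √(u * v) / u] := by
  rw [scalingMat, scalingMat, inv_map_mul_scaleMat_mul (det_tauMat h₁), Matrix.mul_assoc _ h,
    adjugate_tauMat_mul h₁, Matrix.mul_assoc h, adjugate_mul, det_tauMat h₂, one_smul,
    Matrix.mul_one]
  push_cast
  exact inv_scaleMat_mul_map_mul_scaleMat hq hu hv h

theorem exists_gamma0_iff (hpq : p.Coprime q) (hpu : p.Coprime u) (hpv : p.Coprime v)
    (hqu : q.Coprime u) (hqv : q.Coprime v) (huv : u.Coprime v) (hq : 0 < q) (hu : 0 < u)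
    (hv : 0 < v) (h₁ : sbar₁ * (q * v) - 1 = p * u * b₁) (h₂ : sbar₂ * (q * u) - 1 = p * v * b₂)
    (M : Matrix (Fin 2) (Fin 2) ℝ) :
    (∃ g : Matrix (Fin 2) (Fin 2) ℤ, g.det = 1 ∧ ((p * q * u * v : ℕ) : ℤ) ∣ g 1 0 ∧
        M = (scalingMat (p * u) (q * v) sbar₁ b₁)⁻¹ * g.map Int.cast *
          scalingMat (p * v) (q * u) sbar₂ b₂) ↔
      ∃ h : Matrix (Fin 2) (Fin 2) ℤ, h.det = 1 ∧
        ((v : ℤ) ∣ h 0 0 ∧ (q : ℤ) ∣ h 0 1 ∧ (p : ℤ) ∣ h 1 0 ∧ (u : ℤ) ∣ h 1 1) ∧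
        M = !![h 0 0 * √(u * v) / v, h 0 1 / (q * √(u * v));
          h 1 0 * (q * √(u * v)), h 1 1 * √(u * v) / u] := by
  have hdet (h : Matrix (Fin 2) (Fin 2) ℤ) :
      (tauMat (p * u) (q * v) sbar₁ b₁ * h * (tauMat (p * v) (q * u) sbar₂ b₂).adjugate).det =
        h.det := by
    rw [det_mul, det_mul, det_adjugate, det_tauMat h₁, det_tauMat h₂]; simp
  constructor
  · rintro ⟨g, hg, hN, rfl⟩
    set h := (tauMat (p * u) (q * v) sbar₁ b₁).adjugate * g * tauMat (p * v) (q * u) sbar₂ b₂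
    have hgh : g =
        tauMat (p * u) (q * v) sbar₁ b₁ * h * (tauMat (p * v) (q * u) sbar₂ b₂).adjugate := by
      simp only [h, Matrix.mul_assoc, mul_adjugate, det_tauMat h₁, det_tauMat h₂, one_smul,
        Matrix.mul_one, ← Matrix.mul_assoc (tauMat _ _ _ _), Matrix.one_mul]
    rw [hgh, hdet] at hg
    rw [hgh, dvd_lowerLeft_iff hpq hpu hpv hqu hqv huv h₁ h₂] at hN
    exact ⟨h, hg, hN, by rw [hgh, inv_scalingMat_mul_map_mul_scalingMat hq hu hv h₁ h₂]⟩
  · rintro ⟨h, hh, hdvd, rfl⟩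
    exact ⟨_, (hdet h).trans hh, (dvd_lowerLeft_iff hpq hpu hpv hqu hqv huv h₁ h₂ h).2 hdvd,
      (inv_scalingMat_mul_map_mul_scalingMat hq hu hv h₁ h₂ h).symm⟩

lemma sliceMat_eq (hq : 0 < q) (hu : 0 < u) (hv : 0 < v)
    (h₁ : sbar₁ * (q * v) - 1 = p * u * b₁) (h₂ : sbar₂ * (q * u) - 1 = p * v * b₂)
    {c : ℕ} (hc : 0 < c) {α β γ δ : ℤ} (hγ : γ * q = c) (hβ : u * v * α * δ - 1 = c * β) :
    sliceMat c (u * v) √(u * v) (α, δ) =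
      (scalingMat (p * u) (q * v) sbar₁ b₁)⁻¹ *
        (tauMat (p * u) (q * v) sbar₁ b₁ * !![v * α, q * β; γ, u * δ] *
          (tauMat (p * v) (q * u) sbar₂ b₂).adjugate).map Int.cast *
        scalingMat (p * v) (q * u) sbar₂ b₂ := by
  have hW : 0 < √((u : ℝ) * v) := by positivity
  have hq' : (q : ℝ) ≠ 0 := by positivity
  have hu' : (u : ℝ) ≠ 0 := by positivity
  have hv' : (v : ℝ) ≠ 0 := by positivity
  rw [inv_scalingMat_mul_map_mul_scalingMat hq hu hv h₁ h₂, sliceMat, hβ,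
    Int.mul_ediv_cancel_left _ (by positivity)]
  have hγ' : (γ : ℝ) * q = c := by exact_mod_cast hγ
  set W := √((u : ℝ) * v)
  ext i j; fin_cases i <;> fin_cases j <;> simp
  · field_simp
  · field_simp
  · linear_combination -W * hγ'
  · field_simp

theorem setOf_eq_image_sliceMat (hpq : p.Coprime q) (hpu : p.Coprime u) (hpv : p.Coprime v)
    (hqu : q.Coprime u) (hqv : q.Coprime v) (huv : u.Coprime v) (hq : 0 < q) (hu : 0 < u)
    (hv : 0 < v) (h₁ : sbar₁ * (q * v) - 1 = p * u * b₁) (h₂ : sbar₂ * (q * u) - 1 = p * v * b₂)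
    {c : ℕ} (hc : 0 < c) (hpqc : p * q ∣ c) :
    {M : Matrix (Fin 2) (Fin 2) ℝ | (∃ g : Matrix (Fin 2) (Fin 2) ℤ, g.det = 1 ∧
        ((p * q * u * v : ℕ) : ℤ) ∣ g 1 0 ∧ M = (scalingMat (p * u) (q * v) sbar₁ b₁)⁻¹ *
          g.map Int.cast * scalingMat (p * v) (q * u) sbar₂ b₂) ∧
      M 1 0 = c * √(u * v) ∧ M 0 0 ∈ Set.Ico 0 (c * √(u * v)) ∧
        M 1 1 ∈ Set.Ico 0 (c * √(u * v))} =
      sliceMat c (u * v) √(u * v) '' unitPairs c (u * v) := by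
  have hW : 0 < √((u : ℝ) * v) := by positivity
  have hq' : (q : ℝ) ≠ 0 := by positivity
  have hu' : (u : ℝ) ≠ 0 := by positivity
  have hv' : (v : ℝ) ≠ 0 := by positivity
  ext M
  simp only [Set.mem_ofPred_eq, exists_gamma0_iff hpq hpu hpv hqu hqv huv hq hu hv h₁ h₂,
    Set.mem_image, unitPairs]
  constructor
  · rintro ⟨⟨h, hdet, ⟨⟨α, hα⟩, ⟨β, hβ⟩, -, ⟨δ, hδ⟩⟩, rfl⟩, h10, h00, h11⟩
    simp only [of_apply, cons_val', cons_val_zero, cons_val_one, empty_val', cons_val_fin_one,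
      hα, hδ, Int.cast_mul, Int.cast_natCast] at h10 h00 h11
    rw [show (v : ℝ) * α * √(u * v) / v = α * √(u * v) by field_simp,
      mul_mem_Ico_mul_iff hW] at h00
    rw [show (u : ℝ) * δ * √(u * v) / u = δ * √(u * v) by field_simp,
      mul_mem_Ico_mul_iff hW] at h11
    have hγ : h 1 0 * q = c := by
      have : (h 1 0 : ℝ) * q = c := mul_right_cancel₀ hW.ne' (by linear_combination h10)
      exact_mod_cast this
    have hkey : u * v * α * δ - 1 = c * β := by
      rw [det_fin_two, hα, hβ, hδ] at hdet
      linear_combination hdet + β * hγ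
    refine ⟨(α, δ), ⟨h00, h11, (Int.modEq_iff_dvd.2 ⟨β, hkey⟩).symm⟩, ?_⟩
    rw [sliceMat_eq hq hu hv h₁ h₂ hc hγ hkey, inv_scalingMat_mul_map_mul_scalingMat hq hu hv h₁ h₂]
    simp [hα, hβ, hδ]
  · rintro ⟨⟨α, δ⟩, ⟨hα, hδ, hmod⟩, rfl⟩
    obtain ⟨β, hβ⟩ := hmod.symm.dvd
    obtain ⟨e, rfl⟩ := hpqc
    dsimp only at hα hδ hβ
    refine ⟨⟨!![v * α, q * β; p * e, u * δ], ?_, ⟨by simp, by simp, by simp, by simp⟩,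
      (sliceMat_eq hq hu hv h₁ h₂ hc (by push_cast; ring) hβ).trans
        (inv_scalingMat_mul_map_mul_scalingMat hq hu hv h₁ h₂ _)⟩, ?_, ?_, ?_⟩
    · rw [det_fin_two_of]; push_cast at hβ; linear_combination hβ
    · simp [sliceMat]
    · simpa [sliceMat] using (mul_mem_Ico_mul_iff hW).2 hα
    · simpa [sliceMat] using (mul_mem_Ico_mul_iff hW).2 hδ

lemma lowerRight_congr (h₁ : sbar₁ * (q * v) - 1 = p * u * b₁)
    (h₂ : sbar₂ * (q * u) - 1 = p * v * b₂) {e : ℕ} {α β δ z : ℤ}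
    (hβ : u * v * α * δ - 1 = p * q * e * β)
    (hz : (tauMat (p * u) (q * v) sbar₁ b₁ * !![v * α, q * β; p * e, u * δ] *
      (tauMat (p * v) (q * u) sbar₂ b₂).adjugate) 1 1 = z) :
    (z : ZMod p) = u * δ ∧ v * (z : ZMod q) = u * v * α ∧
      p * q * v * (z : ZMod u) = p * q * e ∧ p * q * e * (z : ZMod v) = -(p * q * u) := by
  simp only [tauMat, adjugate_fin_two, mul_apply, Fin.sum_univ_two, of_apply, cons_val',
    cons_val_zero, cons_val_one, empty_val', cons_val_fin_one, mul_neg] at hz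
  refine ⟨?_, ?_, ?_, ?_⟩
  · have hz' := congrArg (Int.cast : ℤ → ZMod p) hz
    have h₁' := congrArg (Int.cast : ℤ → ZMod p) h₁
    push_cast [ZMod.natCast_self] at hz' h₁'
    linear_combination -hz' + u * δ * h₁'
  · have hz' := congrArg (Int.cast : ℤ → ZMod q) hz
    have h₂' := congrArg (Int.cast : ℤ → ZMod q) h₂
    push_cast [ZMod.natCast_self] at hz' h₂'
    linear_combination -v * hz' + u * v * α * h₂'
  · have hz' := congrArg (Int.cast : ℤ → ZMod u) hz
    have h₁' := congrArg (Int.cast : ℤ → ZMod u) h₁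
    have h₂' := congrArg (Int.cast : ℤ → ZMod u) h₂
    push_cast [ZMod.natCast_self] at hz' h₁' h₂'
    linear_combination -p * q * v * hz' - p * q * e * p * v * b₂ * h₁' + p * q * e * h₂'
  · have hz' := congrArg (Int.cast : ℤ → ZMod v) hz
    have hβ' := congrArg (Int.cast : ℤ → ZMod v) hβ
    push_cast [ZMod.natCast_self] at hz' hβ'
    linear_combination -p * q * e * hz' - p * q * u * hβ'

theorem conj_apply_floor_sliceMat (hpu : p.Coprime u) (hqu : q.Coprime u) (hqv : q.Coprime v)
    (huv : u.Coprime v) (hq : 0 < q) (hu : 0 < u) (hv : 0 < v)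
    (h₁ : sbar₁ * (q * v) - 1 = p * u * b₁) (h₂ : sbar₂ * (q * u) - 1 = p * v * b₂)
    (χ : DirichletCharacter ℂ (p * q * u * v)) (χp : DirichletCharacter ℂ p)
    (χq : DirichletCharacter ℂ q) (χu : DirichletCharacter ℂ u) (χv : DirichletCharacter ℂ v)
    (hfact : ∀ x : ℤ, χ x = χp x * χq x * χu x * χv x) {c : ℕ} (hc : 0 < c) (hpqc : p * q ∣ c)
    (hcv : c.Coprime v) {t : ℤ} (ht : t * (u * v) ≡ 1 [ZMOD c]) {a : ℕ}
    (ha : a ∈ (Finset.range c).filter (fun a => Nat.gcd a c = 1)) :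
    (starRingEnd ℂ) (χ ⌊(scalingMat (p * u) (q * v) sbar₁ b₁ *
        sliceMat c (u * v) √(u * v) (unitParam c t a) *
        (scalingMat (p * v) (q * u) sbar₂ b₂)⁻¹) 1 1⌋) =
      χv (-1) * (starRingEnd ℂ) (χp u) * (starRingEnd ℂ) (χv u) * χq v * χu v *
        χu ((p * q : ℕ) : ZMod u) * (starRingEnd ℂ) (χv ((p * q : ℕ) : ZMod v)) *
        (starRingEnd ℂ) (χu c) * χv c *
        ((starRingEnd ℂ) (χp (((a : ZMod c)⁻¹).val : ℕ)) * (starRingEnd ℂ) (χq a)) := by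
  have : NeZero c := ⟨hc.ne'⟩
  have hmem : unitParam c t a ∈ unitPairs c (u * v) := by
    rw [unitPairs_eq_image_unitParam ht]; exact ⟨a, ha, rfl⟩
  obtain ⟨-, -, hmod⟩ := hmem
  obtain ⟨β, hβ⟩ := hmod.symm.dvd
  obtain ⟨e, rfl⟩ := hpqc
  simp only [unitParam] at hβ ⊢
  rw [sliceMat_eq hq hu hv h₁ h₂ hc (γ := p * e) (by push_cast; ring) hβ,
    mul_nonsing_inv_mul_mul_nonsing_inv (isUnit_det_scalingMat h₁ (by positivity))
      (isUnit_det_scalingMat h₂ (by positivity)), map_apply, Int.floor_intCast]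
  push_cast at hβ
  obtain ⟨hzp, hzq, hzu, hzv⟩ := lowerRight_congr h₁ h₂ hβ rfl
  refine conj_apply_eq_of_congr hpu hqu hqv huv χ χp χq χu χv hfact hcv ?_ ?_ ?_ ?_
  · simpa using hzp
  · have hqc : (q : ℤ) ∣ ((p * q * e : ℕ) : ℤ) := ⟨p * e, by push_cast; ring⟩
    have hα := (ZMod.intCast_eq_intCast_iff _ _ q).2 ((Int.mod_modEq (a * t) _).of_dvd hqc)
    have htq := (ZMod.intCast_eq_intCast_iff _ _ q).2 (ht.of_dvd hqc)
    push_cast at hzq hα htq ⊢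
    rw [hzq, hα]
    linear_combination (a : ZMod q) * htq
  · simpa using hzu
  · simpa using hzv

end AtkinLehner

theorem stmt_4_general (p q u v : ℕ) (hq : 0 < q) (hu : 0 < u) (hv : 0 < v)
    (hpq : Nat.Coprime p q) (hpu : Nat.Coprime p u) (hpv : Nat.Coprime p v)
    (hqu : Nat.Coprime q u) (hqv : Nat.Coprime q v) (huv : Nat.Coprime u v)
    (χ : DirichletCharacter ℂ (p * q * u * v))
    (χp : DirichletCharacter ℂ p) (χq : DirichletCharacter ℂ q)
    (χu : DirichletCharacter ℂ u) (χv : DirichletCharacter ℂ v)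
    (hfact : ∀ x : ℤ, χ ((x : ℤ) : ZMod (p * q * u * v)) =
      χp ((x : ℤ) : ZMod p) * χq ((x : ℤ) : ZMod q) * χu ((x : ℤ) : ZMod u) *
        χv ((x : ℤ) : ZMod v))
    (sbar₁ sbar₂ b₁ b₂ : ℤ)
    (h₁ : sbar₁ * ((q * v : ℕ) : ℤ) - 1 = ((p * u : ℕ) : ℤ) * b₁)
    (h₂ : sbar₂ * ((q * u : ℕ) : ℤ) - 1 = ((p * v : ℕ) : ℤ) * b₂)
    (σ₁ σ₂ : Matrix (Fin 2) (Fin 2) ℝ)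
    (hσ₁ : σ₁ = !![(1 : ℝ), (b₁ : ℝ); ((p * u : ℕ) : ℝ), ((sbar₁ * ((q * v : ℕ) : ℤ) : ℤ) : ℝ)] *
      !![Real.sqrt ((q * v : ℕ) : ℝ), 0; 0, (Real.sqrt ((q * v : ℕ) : ℝ))⁻¹])
    (hσ₂ : σ₂ = !![(1 : ℝ), (b₂ : ℝ); ((p * v : ℕ) : ℝ), ((sbar₂ * ((q * u : ℕ) : ℤ) : ℤ) : ℝ)] *
      !![Real.sqrt ((q * u : ℕ) : ℝ), 0; 0, (Real.sqrt ((q * u : ℕ) : ℝ))⁻¹])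
    (m n : ℤ) (c : ℕ) (hc : 0 < c) (hpqc : p * q ∣ c) (hcuv : Nat.Coprime c (u * v))
    (γ₀ : ℝ) (hγ₀ : γ₀ = (c : ℝ) * Real.sqrt ((u * v : ℕ) : ℝ))
    (D : Set (Matrix (Fin 2) (Fin 2) ℝ))
    (hD : D = {M | (∃ g : Matrix (Fin 2) (Fin 2) ℤ, g.det = 1 ∧
        ((p * q * u * v : ℕ) : ℤ) ∣ g 1 0 ∧ M = σ₁⁻¹ * g.map (Int.cast : ℤ → ℝ) * σ₂) ∧
      M 1 0 = γ₀ ∧ M 0 0 ∈ Set.Ico 0 γ₀ ∧ M 1 1 ∈ Set.Ico 0 γ₀})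
    (t : ℤ) (ht : t * ((u * v : ℕ) : ℤ) ≡ 1 [ZMOD (c : ℤ)])
    (frak : ℂ)
    (hfrak : frak = χv (-1) * (starRingEnd ℂ) (χp (u : ZMod p)) *
      (starRingEnd ℂ) (χv (u : ZMod v)) * χq (v : ZMod q) * χu (v : ZMod u) *
      χu ((p * q : ℕ) : ZMod u) * (starRingEnd ℂ) (χv ((p * q : ℕ) : ZMod v))) :
    (∀ M ∈ D, ∃ g : Matrix (Fin 2) (Fin 2) ℤ, g.det = 1 ∧
        ((p * q * u * v : ℕ) : ℤ) ∣ g 1 0 ∧ σ₁ * M * σ₂⁻¹ = g.map (Int.cast : ℤ → ℝ)) ∧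
    ∑ᶠ M ∈ D, (starRingEnd ℂ) (χ ((⌊(σ₁ * M * σ₂⁻¹) 1 1⌋ : ℤ) : ZMod (p * q * u * v))) *
        eFun ((M 0 0 * (m : ℝ) + M 1 1 * (n : ℝ)) / γ₀) =
      frak * (starRingEnd ℂ) (χu (c : ZMod u)) * χv (c : ZMod v) *
        ∑ a ∈ (Finset.range c).filter (fun a => Nat.gcd a c = 1),
          (starRingEnd ℂ) (χp ((((a : ZMod c)⁻¹).val : ℕ) : ZMod p)) *
            (starRingEnd ℂ) (χq (a : ZMod q)) *
            eFun ((((a : ℤ) * t * m + ((((a : ZMod c)⁻¹).val : ℕ) : ℤ) * n : ℤ) : ℝ) / (c : ℝ)) := by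
  push_cast at h₁ h₂ ht
  have hσ₁' : σ₁ = scalingMat (p * u) (q * v) sbar₁ b₁ := by
    rw [hσ₁, ← scalingMat_natCast]; push_cast; rfl
  have hσ₂' : σ₂ = scalingMat (p * v) (q * u) sbar₂ b₂ := by
    rw [hσ₂, ← scalingMat_natCast]; push_cast; rfl
  subst hσ₁' hσ₂' hD hγ₀ hfrak
  have hcv : c.Coprime v := Nat.Coprime.coprime_dvd_right (dvd_mul_left v u) hcuv
  have : NeZero c := ⟨hc.ne'⟩
  refine ⟨fun M ⟨⟨g, hg, hN, hM⟩, _⟩ =>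
    ⟨g, hg, hN, hM ▸ mul_nonsing_inv_mul_mul_nonsing_inv (isUnit_det_scalingMat h₁ (by positivity))
      (isUnit_det_scalingMat h₂ (by positivity)) _⟩, ?_⟩
  rw [show ((u * v : ℕ) : ℝ) = u * v from Nat.cast_mul u v,
    setOf_eq_image_sliceMat hpq hpu hpv hqu hqv huv hq hu hv h₁ h₂ hc hpqc,
    unitPairs_eq_image_unitParam ht,
    ← Set.image_comp, finsum_mem_image ((sliceMat_injective (by positivity)).comp_injOn
      (injOn_unitParam ht)), finsum_mem_coe_finset, Finset.mul_sum]
  refine Finset.sum_congr rfl fun a ha => ?_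
  rw [Function.comp_apply,
    conj_apply_floor_sliceMat hpu hqu hqv huv hq hu hv h₁ h₂ χ χp χq χu χv hfact hc hpqc hcv ht ha,
    eFun_sliceMat hc (by positivity) m n a]
  ring

/-- **Kloosterman sums for a pair of Atkin–Lehner cusps with nebentypus**
(Theorem 2.8 of the paper): with `N = pquv`, `r₁ = pu`, `r₂ = pv`, an even character
`χ = χ_p χ_q χ_u χ_v` mod `N`, and modulus `γ₀ = c√(uv)` with `pq ∣ c`, `(c,uv) = 1`,
the Kloosterman sum `S_{1/r₁,1/r₂}(m,n;c√(uv);χ)` equals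
`𝔣 · χ̄_u(c)χ_v(c) ∑_{ad≡1(c)} χ̄_p(d)χ̄_q(a) e((a·(uv)* m + dn)/c)`. -/
theorem stmt_4 (p q u v : ℕ) (hp : 0 < p) (hq : 0 < q) (hu : 0 < u) (hv : 0 < v)
    (hpq : Nat.Coprime p q) (hpu : Nat.Coprime p u) (hpv : Nat.Coprime p v)
    (hqu : Nat.Coprime q u) (hqv : Nat.Coprime q v) (huv : Nat.Coprime u v)
    (χ : DirichletCharacter ℂ (p * q * u * v))
    (χp : DirichletCharacter ℂ p) (χq : DirichletCharacter ℂ q)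
    (χu : DirichletCharacter ℂ u) (χv : DirichletCharacter ℂ v)
    (hχeven : χ (-1) = 1)
    (hfact : ∀ x : ℤ, χ ((x : ℤ) : ZMod (p * q * u * v)) =
      χp ((x : ℤ) : ZMod p) * χq ((x : ℤ) : ZMod q) * χu ((x : ℤ) : ZMod u) *
        χv ((x : ℤ) : ZMod v))
    (sbar₁ sbar₂ b₁ b₂ : ℤ)
    (h₁ : sbar₁ * ((q * v : ℕ) : ℤ) - 1 = ((p * u : ℕ) : ℤ) * b₁)
    (h₂ : sbar₂ * ((q * u : ℕ) : ℤ) - 1 = ((p * v : ℕ) : ℤ) * b₂)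
    (σ₁ σ₂ : Matrix (Fin 2) (Fin 2) ℝ)
    (hσ₁ : σ₁ = !![(1 : ℝ), (b₁ : ℝ); ((p * u : ℕ) : ℝ), ((sbar₁ * ((q * v : ℕ) : ℤ) : ℤ) : ℝ)] *
      !![Real.sqrt ((q * v : ℕ) : ℝ), 0; 0, (Real.sqrt ((q * v : ℕ) : ℝ))⁻¹])
    (hσ₂ : σ₂ = !![(1 : ℝ), (b₂ : ℝ); ((p * v : ℕ) : ℝ), ((sbar₂ * ((q * u : ℕ) : ℤ) : ℤ) : ℝ)] *
      !![Real.sqrt ((q * u : ℕ) : ℝ), 0; 0, (Real.sqrt ((q * u : ℕ) : ℝ))⁻¹])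
    (m n : ℤ) (c : ℕ) (hc : 0 < c) (hpqc : p * q ∣ c) (hcuv : Nat.Coprime c (u * v))
    (γ₀ : ℝ) (hγ₀ : γ₀ = (c : ℝ) * Real.sqrt ((u * v : ℕ) : ℝ))
    (D : Set (Matrix (Fin 2) (Fin 2) ℝ))
    (hD : D = {M | (∃ g : Matrix (Fin 2) (Fin 2) ℤ, g.det = 1 ∧
        ((p * q * u * v : ℕ) : ℤ) ∣ g 1 0 ∧ M = σ₁⁻¹ * g.map (Int.cast : ℤ → ℝ) * σ₂) ∧
      M 1 0 = γ₀ ∧ M 0 0 ∈ Set.Ico 0 γ₀ ∧ M 1 1 ∈ Set.Ico 0 γ₀})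
    (t : ℤ) (ht : t * ((u * v : ℕ) : ℤ) ≡ 1 [ZMOD (c : ℤ)])
    (frak : ℂ)
    (hfrak : frak = χv (-1) * (starRingEnd ℂ) (χp (u : ZMod p)) *
      (starRingEnd ℂ) (χv (u : ZMod v)) * χq (v : ZMod q) * χu (v : ZMod u) *
      χu ((p * q : ℕ) : ZMod u) * (starRingEnd ℂ) (χv ((p * q : ℕ) : ZMod v))) :
    (∀ M ∈ D, ∃ g : Matrix (Fin 2) (Fin 2) ℤ, g.det = 1 ∧
        ((p * q * u * v : ℕ) : ℤ) ∣ g 1 0 ∧ σ₁ * M * σ₂⁻¹ = g.map (Int.cast : ℤ → ℝ)) ∧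
    ∑ᶠ M ∈ D, (starRingEnd ℂ) (χ ((⌊(σ₁ * M * σ₂⁻¹) 1 1⌋ : ℤ) : ZMod (p * q * u * v))) *
        eFun ((M 0 0 * (m : ℝ) + M 1 1 * (n : ℝ)) / γ₀) =
      frak * (starRingEnd ℂ) (χu (c : ZMod u)) * χv (c : ZMod v) *
        ∑ a ∈ (Finset.range c).filter (fun a => Nat.gcd a c = 1),
          (starRingEnd ℂ) (χp ((((a : ZMod c)⁻¹).val : ℕ) : ZMod p)) *
            (starRingEnd ℂ) (χq (a : ZMod q)) *
            eFun ((((a : ℤ) * t * m + ((((a : ZMod c)⁻¹).val : ℕ) : ℤ) * n : ℤ) : ℝ) / (c : ℝ)) :=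
  stmt_4_general p q u v hq hu hv hpq hpu hpv hqu hqv huv χ χp χq χu χv hfact sbar₁ sbar₂ b₁ b₂ h₁
    h₂ σ₁ σ₂ hσ₁ hσ₂ m n c hc hpqc hcuv γ₀ hγ₀ D hD t ht frak hfrak
end

section
/- Let N = rs with r, s positive integers and gcd(r, s) = 1, and let σ_{1/r} ∈ SL₂(ℝ) be the Atkin–Lehner scaling matrix of the cusp 1/r. Then: (i) a positive real number γ occurs as the lower-left entry of some element of Γ₀(N) · σ_{1/r} if and only if γ = c·√s for some positive integer c with r ∣ c and gcd(c, s) = 1; (ii) for such a c, writing D for the set of elements M of Γ₀(N) · σ_{1/r} with M₂₁ = c√s, M₁₁ ∈ [0, c√s) and M₂₂ ∈ [0, c√s), one has ∑_{M ∈ D} e((M₁₁·m + M₂₂·n)/(c√s)) = S(t·m, n; c) for all integers m, n, where t is any integer with t·s ≡ 1 (mod c). -/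
open Matrix

/-- The classical Kloosterman sum `S(m,n;c) = ∑_{d mod c, (d,c)=1} e((m d* + n d)/c)`. -/
noncomputable def kloostermanSum (m n : ℤ) (c : ℕ) : ℂ :=
  ∑ d ∈ (Finset.range c).filter (fun d => Nat.gcd d c = 1),
    eFun (((m * (((d : ZMod c)⁻¹).val : ℤ) + n * d : ℤ) : ℝ) / (c : ℝ))

lemma eFun_intCast_div_congr {c : ℕ} {x y : ℤ} (h : x ≡ y [ZMOD c]) :
    eFun (x / c) = eFun (y / c) := by
  rcases eq_or_ne c 0 with rfl | hc
  · simp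
  obtain ⟨k, hk⟩ := (Int.ModEq.dvd h.symm)
  have hxy : (x : ℝ) / c = y / c + k := by
    have hc' : (c : ℝ) ≠ 0 := by exact_mod_cast hc
    rw [show (x : ℝ) = y + c * k by exact_mod_cast (by linarith : x = y + c * k)]
    field_simp
  rw [hxy, eFun_add_intCast]

noncomputable def nuMatrix (s : ℕ) : Matrix (Fin 2) (Fin 2) ℝ := !![√s, 0; 0, (√s)⁻¹]

section nuMatrix

variable (s : ℕ) (h : Matrix (Fin 2) (Fin 2) ℤ)

@[simp]
lemma map_mul_nuMatrix_zero_zero :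
    (h.map (Int.cast : ℤ → ℝ) * nuMatrix s) 0 0 = h 0 0 * √s := by
  simp [nuMatrix, mul_apply]

@[simp]
lemma map_mul_nuMatrix_one_zero :
    (h.map (Int.cast : ℤ → ℝ) * nuMatrix s) 1 0 = h 1 0 * √s := by
  simp [nuMatrix, mul_apply]

@[simp]
lemma map_mul_nuMatrix_one_one :
    (h.map (Int.cast : ℤ → ℝ) * nuMatrix s) 1 1 = h 1 1 * (√s)⁻¹ := by
  simp [nuMatrix, mul_apply]

end nuMatrix

lemma natCast_mul_mul_inv_sqrt (s : ℕ) (x : ℝ) : (s * x) * (√s)⁻¹ = x * √s := by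
  rw [mul_comm (s : ℝ), mul_assoc, ← div_eq_mul_inv, Real.div_sqrt]

lemma mul_mem_Ico_mul_iff_s5 {a x y : ℝ} (ha : 0 < a) :
    x * a ∈ Set.Ico 0 (y * a) ↔ x ∈ Set.Ico 0 y := by
  simp only [Set.mem_Ico, mul_nonneg_iff_of_pos_right ha, mul_lt_mul_iff_left₀ ha]

lemma mul_dvd_mul_sub_mul_iff {r s sbar b x y : ℤ} (hrs : IsCoprime r s)
    (hb : sbar * s - 1 = r * b) : r * s ∣ x * (sbar * s) - y * r ↔ r ∣ x ∧ s ∣ y := by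
  have hr : r ∣ x * (sbar * s) - y * r ↔ r ∣ x := by
    rw [show x * (sbar * s) - y * r = x + r * (x * b - y) by linear_combination x * hb]
    exact dvd_add_left (dvd_mul_right _ _)
  have hs : s ∣ x * (sbar * s) - y * r ↔ s ∣ y := by
    rw [dvd_sub_right (dvd_mul_of_dvd_right (dvd_mul_left s sbar) x)]
    exact ⟨hrs.symm.dvd_of_dvd_mul_right, fun h => dvd_mul_of_dvd_left h r⟩
  exact ⟨fun h => ⟨hr.1 (dvd_of_mul_right_dvd h), hs.1 (dvd_of_mul_left_dvd h)⟩,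
    fun ⟨h₁, h₂⟩ => hrs.mul_dvd (hr.2 h₁) (hs.2 h₂)⟩

lemma map_intCast_mul (A B : Matrix (Fin 2) (Fin 2) ℤ) :
    (A * B).map (Int.cast : ℤ → ℝ) = A.map Int.cast * B.map Int.cast :=
  Matrix.map_mul (f := Int.castRingHom ℝ)

def gamma0Coset (N : ℕ) (σ : Matrix (Fin 2) (Fin 2) ℝ) : Set (Matrix (Fin 2) (Fin 2) ℝ) :=
  {M | ∃ g : Matrix (Fin 2) (Fin 2) ℤ, g.det = 1 ∧ (N : ℤ) ∣ g 1 0 ∧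
    M = g.map (Int.cast : ℤ → ℝ) * σ}

lemma mem_gamma0Coset_iff {r s : ℕ} (hrs : Nat.Coprime r s) {sbar b : ℤ}
    (hb : sbar * s - 1 = r * b) {σ : Matrix (Fin 2) (Fin 2) ℝ}
    (hσ : σ = !![(1 : ℝ), (b : ℝ); (r : ℝ), ((sbar * s : ℤ) : ℝ)] * nuMatrix s)
    (M : Matrix (Fin 2) (Fin 2) ℝ) :
    M ∈ gamma0Coset (r * s) σ ↔ ∃ h : Matrix (Fin 2) (Fin 2) ℤ, h.det = 1 ∧
      (r : ℤ) ∣ h 1 0 ∧ (s : ℤ) ∣ h 1 1 ∧ M = h.map (Int.cast : ℤ → ℝ) * nuMatrix s := by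
  set τ : Matrix (Fin 2) (Fin 2) ℤ := !![1, b; (r : ℤ), sbar * s]
  set τ' : Matrix (Fin 2) (Fin 2) ℤ := !![sbar * s, -b; -(r : ℤ), 1]
  have hdet : τ.det = 1 := by simp only [τ, det_fin_two_of]; linarith
  have hdet' : τ'.det = 1 := by simp only [τ', det_fin_two_of]; linarith
  have hinv : τ' * τ = 1 := by
    ext i j; fin_cases i <;> fin_cases j <;> simp [τ, τ', mul_apply, Fin.sum_univ_two] <;> linarith
  have hσ' : σ = τ.map (Int.cast : ℤ → ℝ) * nuMatrix s := by
    rw [hσ]; congr 1; ext i j; fin_cases i <;> fin_cases j <;> simp [τ]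
  have hdvd (x y : ℤ) :=
    mul_dvd_mul_sub_mul_iff (x := x) (y := y) (Nat.isCoprime_iff_coprime.mpr hrs) hb
  simp only [gamma0Coset, Set.mem_ofPred_eq, Nat.cast_mul]
  constructor
  · rintro ⟨g, hg, hN, rfl⟩
    have hlower : g 1 0 = (g * τ) 1 0 * (sbar * s) - (g * τ) 1 1 * r := by
      simp only [τ, mul_apply, Fin.sum_univ_two, of_apply, cons_val', cons_val_zero,
        cons_val_one, cons_val_fin_one]
      linear_combination (-g 1 0) * hb
    rw [hlower, hdvd] at hN
    exact ⟨g * τ, by rw [det_mul, hg, hdet, one_mul], hN.1, hN.2,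
      by rw [hσ', map_intCast_mul, Matrix.mul_assoc]⟩
  · rintro ⟨h, hh, hr, hs, rfl⟩
    have hlower : (h * τ') 1 0 = h 1 0 * (sbar * s) - h 1 1 * r := by
      simp only [τ', mul_apply, Fin.sum_univ_two, of_apply, cons_val', cons_val_zero,
        cons_val_one, cons_val_fin_one]
      ring
    refine ⟨h * τ', by rw [det_mul, hh, hdet', one_mul], by rw [hlower, hdvd]; exact ⟨hr, hs⟩, ?_⟩
    rw [hσ', map_intCast_mul, Matrix.mul_assoc, ← Matrix.mul_assoc (τ'.map _), ← map_intCast_mul,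
      hinv, Matrix.map_one _ Int.cast_zero Int.cast_one, Matrix.one_mul]

lemma exists_det_eq_one_lowerRow_iff (r s c : ℕ) :
    (∃ h : Matrix (Fin 2) (Fin 2) ℤ, h.det = 1 ∧ (r : ℤ) ∣ h 1 0 ∧ (s : ℤ) ∣ h 1 1 ∧
      h 1 0 = c) ↔ r ∣ c ∧ Nat.Coprime c s := by
  rw [← Int.natCast_dvd_natCast, ← Nat.isCoprime_iff_coprime]
  constructor
  · rintro ⟨h, hdet, hr, hs, hc⟩
    have hrow : IsCoprime (h 1 0) (h 1 1) := ⟨-h 0 1, h 0 0, by rw [det_fin_two] at hdet; linarith⟩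
    exact ⟨hc ▸ hr, hc ▸ hrow.of_isCoprime_of_dvd_right hs⟩
  · rintro ⟨hr, u, v, huv⟩
    exact ⟨!![v, -u; c, s], by rw [det_fin_two_of]; linarith, by simpa using hr, by simp, by simp⟩

lemma exists_mem_gamma0Coset_lowerLeft_iff {r s : ℕ} (hs : 0 < s) (hrs : Nat.Coprime r s)
    {sbar b : ℤ} (hb : sbar * s - 1 = r * b) {σ : Matrix (Fin 2) (Fin 2) ℝ}
    (hσ : σ = !![(1 : ℝ), (b : ℝ); (r : ℝ), ((sbar * s : ℤ) : ℝ)] * nuMatrix s)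
    {γ : ℝ} (hγ : 0 < γ) :
    (∃ M ∈ gamma0Coset (r * s) σ, M 1 0 = γ) ↔
      ∃ c : ℕ, 0 < c ∧ r ∣ c ∧ Nat.Coprime c s ∧ γ = c * √s := by
  have hsqrt : 0 < √(s : ℝ) := Real.sqrt_pos.mpr (by exact_mod_cast hs)
  simp only [mem_gamma0Coset_iff hrs hb hσ]
  constructor
  · rintro ⟨_, ⟨h, hdet, hr, hs, rfl⟩, hγ'⟩
    rw [map_mul_nuMatrix_one_zero] at hγ'
    have hpos : 0 < h 1 0 := by
      have := hγ'.symm ▸ hγ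
      exact_mod_cast pos_of_mul_pos_left this hsqrt.le
    obtain ⟨c, hc⟩ := Int.eq_ofNat_of_zero_le hpos.le
    obtain ⟨hrc, hcs⟩ := (exists_det_eq_one_lowerRow_iff r s c).mp ⟨h, hdet, hr, hs, hc⟩
    exact ⟨c, by omega, hrc, hcs, by rw [← hγ', hc, Int.cast_natCast]⟩
  · rintro ⟨c, -, hrc, hcs, rfl⟩
    obtain ⟨h, hdet, hr, hs, hc⟩ := (exists_det_eq_one_lowerRow_iff r s c).mpr ⟨hrc, hcs⟩
    exact ⟨_, ⟨h, hdet, hr, hs, rfl⟩, by simp [hc]⟩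

def inverseMod (x c : ℕ) : ℕ := ((x : ZMod c)⁻¹).val

lemma natCast_inverseMod (x c : ℕ) [NeZero c] : (inverseMod x c : ZMod c) = (x : ZMod c)⁻¹ :=
  ZMod.natCast_zmod_val _

lemma inverseMod_lt (x c : ℕ) [NeZero c] : inverseMod x c < c :=
  ZMod.val_lt _

lemma inverseMod_mul_modEq {x c : ℕ} [NeZero c] (hx : Nat.Coprime x c) :
    (inverseMod x c : ℤ) * x ≡ 1 [ZMOD c] := by
  rw [← ZMod.intCast_eq_intCast_iff]
  push_cast
  rw [natCast_inverseMod, mul_comm, ZMod.coe_mul_inv_eq_one x hx]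

lemma inverseMod_mul_modEq_mul {s c d : ℕ} [NeZero c] (hs : Nat.Coprime s c)
    (hd : Nat.Coprime d c) {t : ℤ} (ht : t * s ≡ 1 [ZMOD c]) :
    (inverseMod (s * d) c : ℤ) ≡ t * inverseMod d c [ZMOD c] := by
  have ha := (ZMod.intCast_eq_intCast_iff _ _ _).mpr (inverseMod_mul_modEq (hs.mul_left hd))
  have he := (ZMod.intCast_eq_intCast_iff _ _ _).mpr (inverseMod_mul_modEq hd)
  have ht' := (ZMod.intCast_eq_intCast_iff _ _ _).mpr ht
  rw [← ZMod.intCast_eq_intCast_iff]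
  push_cast at ha he ht' ⊢
  linear_combination (t * inverseMod d c) * ha - (inverseMod (s * d) c * d * inverseMod d c) * ht'
    - inverseMod (s * d) c * he

def kloostermanMatrix (s c d : ℕ) : Matrix (Fin 2) (Fin 2) ℤ :=
  !![inverseMod (s * d) c, (inverseMod (s * d) c * (s * d) - 1) / c; c, s * d]

lemma det_kloostermanMatrix {s c d : ℕ} [NeZero c] (h : Nat.Coprime (s * d) c) :
    (kloostermanMatrix s c d).det = 1 := by
  have := Int.ediv_mul_cancel (Int.ModEq.dvd (inverseMod_mul_modEq h).symm)
  push_cast at this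
  rw [kloostermanMatrix, det_fin_two_of]
  linarith

lemma eq_kloostermanMatrix {s c d : ℕ} [NeZero c] {h : Matrix (Fin 2) (Fin 2) ℤ}
    (hdet : h.det = 1) (h10 : h 1 0 = c) (h11 : h 1 1 = s * d) (h00 : 0 ≤ h 0 0)
    (h00' : h 0 0 < c) : h = kloostermanMatrix s c d := by
  rw [det_fin_two, h10, h11] at hdet
  have hinv : ((s * d : ℕ) : ZMod c)⁻¹ = h 0 0 :=
    ZMod.inv_eq_of_mul_eq_one _ _ _ (by
      have := congrArg (Int.cast : ℤ → ZMod c) hdet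
      push_cast at this ⊢
      simpa [mul_comm] using this)
  have ha : (inverseMod (s * d) c : ℤ) = h 0 0 := by
    rw [inverseMod, hinv, ZMod.val_intCast, Int.emod_eq_of_lt h00 h00']
  have hb : h 0 1 = (h 0 0 * (s * d) - 1) / c := by
    rw [← hdet, sub_sub_cancel, Int.mul_ediv_cancel _ (by exact_mod_cast NeZero.ne c)]
  ext i j
  fin_cases i <;> fin_cases j <;> simp [kloostermanMatrix, ha, hb, h10, h11]

def gamma0CosetReps (N : ℕ) (σ : Matrix (Fin 2) (Fin 2) ℝ) (γ : ℝ) :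
    Set (Matrix (Fin 2) (Fin 2) ℝ) :=
  {M | M ∈ gamma0Coset N σ ∧ M 1 0 = γ ∧ M 0 0 ∈ Set.Ico 0 γ ∧ M 1 1 ∈ Set.Ico 0 γ}

lemma map_mul_nuMatrix_kloostermanMatrix_one_one (s c d : ℕ) :
    ((kloostermanMatrix s c d).map (Int.cast : ℤ → ℝ) * nuMatrix s) 1 1 = d * √s := by
  simp [kloostermanMatrix, natCast_mul_mul_inv_sqrt]

lemma bijOn_kloostermanMatrix {r s : ℕ} (hs : 0 < s) (hrs : Nat.Coprime r s)
    {sbar b : ℤ} (hb : sbar * s - 1 = r * b) {σ : Matrix (Fin 2) (Fin 2) ℝ}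
    (hσ : σ = !![(1 : ℝ), (b : ℝ); (r : ℝ), ((sbar * s : ℤ) : ℝ)] * nuMatrix s)
    {c : ℕ} [NeZero c] (hrc : r ∣ c) (hcs : Nat.Coprime c s) :
    Set.BijOn (fun d => (kloostermanMatrix s c d).map (Int.cast : ℤ → ℝ) * nuMatrix s)
      ((Finset.range c).filter (fun d => Nat.gcd d c = 1))
      (gamma0CosetReps (r * s) σ (c * √s)) := by
  have hsqrt : 0 < √(s : ℝ) := Real.sqrt_pos.mpr (by exact_mod_cast hs)
  simp only [Finset.coe_filter, Finset.mem_range]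
  refine ⟨?_, ?_, ?_⟩
  · rintro d ⟨hdc, hd⟩
    refine ⟨(mem_gamma0Coset_iff hrs hb hσ _).mpr
      ⟨_, det_kloostermanMatrix (hcs.symm.mul_left hd), ?_, ?_, rfl⟩, ?_, ?_, ?_⟩
    · simpa [kloostermanMatrix] using Int.natCast_dvd_natCast.mpr hrc
    · simp [kloostermanMatrix]
    · simp [kloostermanMatrix]
    · simpa [kloostermanMatrix, mul_mem_Ico_mul_iff_s5 hsqrt] using inverseMod_lt (s * d) c
    · dsimp only
      rw [map_mul_nuMatrix_kloostermanMatrix_one_one, mul_mem_Ico_mul_iff_s5 hsqrt]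
      exact ⟨by positivity, by exact_mod_cast hdc⟩
  · intro d₁ _ d₂ _ h
    have h11 := congrFun (congrFun h 1) 1
    simp only [map_mul_nuMatrix_kloostermanMatrix_one_one] at h11
    exact_mod_cast mul_right_cancel₀ hsqrt.ne' h11
  · rintro M ⟨hM, h10, h00, h11⟩
    obtain ⟨h, hdet, -, ⟨d, hd⟩, rfl⟩ := (mem_gamma0Coset_iff hrs hb hσ M).mp hM
    rw [map_mul_nuMatrix_one_zero] at h10
    rw [map_mul_nuMatrix_zero_zero, mul_mem_Ico_mul_iff_s5 hsqrt] at h00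
    rw [map_mul_nuMatrix_one_one, hd, Int.cast_mul, Int.cast_natCast, natCast_mul_mul_inv_sqrt,
      mul_mem_Ico_mul_iff_s5 hsqrt] at h11
    have h10' : h 1 0 = c := by exact_mod_cast mul_right_cancel₀ hsqrt.ne' h10
    obtain ⟨d, rfl⟩ := Int.eq_ofNat_of_zero_le (by exact_mod_cast h11.1 : (0 : ℤ) ≤ d)
    have hdc : IsCoprime (d : ℤ) c := ⟨h 0 0 * s, -h 0 1, by
      rw [det_fin_two, h10', hd] at hdet; linear_combination hdet⟩
    refine ⟨d, ⟨by exact_mod_cast h11.2, Nat.isCoprime_iff_coprime.mp hdc⟩, ?_⟩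
    rw [eq_kloostermanMatrix hdet h10' hd (by exact_mod_cast h00.1) (by exact_mod_cast h00.2)]

lemma eFun_kloostermanMatrix {s c d : ℕ} [NeZero c] (hs : 0 < s) (hcs : Nat.Coprime c s)
    (hd : Nat.Coprime d c) {t : ℤ} (ht : t * s ≡ 1 [ZMOD c]) (m n : ℤ) :
    eFun ((((kloostermanMatrix s c d).map (Int.cast : ℤ → ℝ) * nuMatrix s) 0 0 * m +
        ((kloostermanMatrix s c d).map (Int.cast : ℤ → ℝ) * nuMatrix s) 1 1 * n) / (c * √s)) =
      eFun (((t * m * inverseMod d c + n * d : ℤ) : ℝ) / c) := by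
  have hsqrt : 0 < √(s : ℝ) := Real.sqrt_pos.mpr (by exact_mod_cast hs)
  have hc : (c : ℝ) ≠ 0 := by exact_mod_cast NeZero.ne c
  rw [map_mul_nuMatrix_kloostermanMatrix_one_one, map_mul_nuMatrix_zero_zero,
    show (kloostermanMatrix s c d) 0 0 = inverseMod (s * d) c from rfl,
    show ((inverseMod (s * d) c : ℤ) * √s * m + d * √s * n) / (c * √s) =
      ((inverseMod (s * d) c * m + d * n : ℤ) : ℝ) / c by push_cast; field_simp]
  apply eFun_intCast_div_congr
  have := ((inverseMod_mul_modEq_mul hcs.symm hd ht).mul_right m).add_right (d * n)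
  convert this using 1
  ring

theorem stmt_5_general (r s : ℕ) (hs : 0 < s) (hrs : Nat.Coprime r s)
    (sbar b : ℤ) (hb : sbar * s - 1 = r * b)
    (σ : Matrix (Fin 2) (Fin 2) ℝ)
    (hσ : σ = !![(1 : ℝ), (b : ℝ); (r : ℝ), ((sbar * s : ℤ) : ℝ)] *
      !![Real.sqrt s, 0; 0, (Real.sqrt s)⁻¹]) :
    (∀ γ : ℝ, 0 < γ →
      ((∃ g : Matrix (Fin 2) (Fin 2) ℤ, g.det = 1 ∧ ((r * s : ℕ) : ℤ) ∣ g 1 0 ∧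
          (g.map (Int.cast : ℤ → ℝ) * σ) 1 0 = γ) ↔
        ∃ c : ℕ, 0 < c ∧ r ∣ c ∧ Nat.Coprime c s ∧ γ = (c : ℝ) * Real.sqrt s)) ∧
    (∀ c : ℕ, 0 < c → r ∣ c → Nat.Coprime c s → ∀ m n t : ℤ, t * s ≡ 1 [ZMOD (c : ℤ)] →
      ∑ᶠ M ∈ {M : Matrix (Fin 2) (Fin 2) ℝ |
          (∃ g : Matrix (Fin 2) (Fin 2) ℤ, g.det = 1 ∧ ((r * s : ℕ) : ℤ) ∣ g 1 0 ∧
            M = g.map (Int.cast : ℤ → ℝ) * σ) ∧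
          M 1 0 = (c : ℝ) * Real.sqrt s ∧
          M 0 0 ∈ Set.Ico 0 ((c : ℝ) * Real.sqrt s) ∧
          M 1 1 ∈ Set.Ico 0 ((c : ℝ) * Real.sqrt s)},
        eFun ((M 0 0 * (m : ℝ) + M 1 1 * (n : ℝ)) / ((c : ℝ) * Real.sqrt s)) =
      kloostermanSum (t * m) n c) := by
  refine ⟨fun γ hγ => ?_, fun c hc hrc hcs m n t ht => ?_⟩
  · rw [← exists_mem_gamma0Coset_lowerLeft_iff hs hrs hb hσ hγ]
    exact ⟨fun ⟨g, hg, hN, h10⟩ => ⟨_, ⟨g, hg, hN, rfl⟩, h10⟩,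
      fun ⟨_, ⟨g, hg, hN, hM⟩, h10⟩ => ⟨g, hg, hN, hM ▸ h10⟩⟩
  · have : NeZero c := ⟨hc.ne'⟩
    rw [kloostermanSum, ← finsum_mem_coe_finset]
    refine (finsum_mem_eq_of_bijOn _ (bijOn_kloostermanMatrix hs hrs hb hσ hrc hcs)
      fun d hd => ?_).symm
    exact (eFun_kloostermanMatrix hs hcs (Finset.mem_filter.mp hd).2 ht m n).symm

/-- **Kloosterman sums for the pair of cusps `∞`, `1/r` with Atkin–Lehner scaling**
(Proposition 2.5 of the paper): (i) the allowed moduli are exactly `c√s` with `r ∣ c`,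
`(c,s) = 1`; (ii) for such `c`, `S_{∞,1/r}(m,n;c√s) = S(s̄m, n; c)`. -/
theorem stmt_5 (r s : ℕ) (hr : 0 < r) (hs : 0 < s) (hrs : Nat.Coprime r s)
    (sbar b : ℤ) (hb : sbar * s - 1 = r * b)
    (σ : Matrix (Fin 2) (Fin 2) ℝ)
    (hσ : σ = !![(1 : ℝ), (b : ℝ); (r : ℝ), ((sbar * s : ℤ) : ℝ)] *
      !![Real.sqrt s, 0; 0, (Real.sqrt s)⁻¹]) :
    (∀ γ : ℝ, 0 < γ →
      ((∃ g : Matrix (Fin 2) (Fin 2) ℤ, g.det = 1 ∧ ((r * s : ℕ) : ℤ) ∣ g 1 0 ∧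
          (g.map (Int.cast : ℤ → ℝ) * σ) 1 0 = γ) ↔
        ∃ c : ℕ, 0 < c ∧ r ∣ c ∧ Nat.Coprime c s ∧ γ = (c : ℝ) * Real.sqrt s)) ∧
    (∀ c : ℕ, 0 < c → r ∣ c → Nat.Coprime c s → ∀ m n t : ℤ, t * s ≡ 1 [ZMOD (c : ℤ)] →
      ∑ᶠ M ∈ {M : Matrix (Fin 2) (Fin 2) ℝ |
          (∃ g : Matrix (Fin 2) (Fin 2) ℤ, g.det = 1 ∧ ((r * s : ℕ) : ℤ) ∣ g 1 0 ∧
            M = g.map (Int.cast : ℤ → ℝ) * σ) ∧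
          M 1 0 = (c : ℝ) * Real.sqrt s ∧
          M 0 0 ∈ Set.Ico 0 ((c : ℝ) * Real.sqrt s) ∧
          M 1 1 ∈ Set.Ico 0 ((c : ℝ) * Real.sqrt s)},
        eFun ((M 0 0 * (m : ℝ) + M 1 1 * (n : ℝ)) / ((c : ℝ) * Real.sqrt s)) =
      kloostermanSum (t * m) n c) :=
  stmt_5_general r s hs hrs sbar b hb σ hσ
end

section
/- Let N be a positive integer and let p, q be coprime integers with q ≥ 1. Then there exist a matrix γ ∈ Γ₀(N), an integer w with 1 ≤ w ≤ N, and an integer p′ with p′ ≡ p (mod gcd(q, N)) and gcd(p′, N) = 1, such that γ·(p, q)ᵀ = (1, w)ᵀ and w ≡ p′·q (mod N). -/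
/-!
Shift `p` by a multiple of `q` to `p' = p + qk` prime to `N` (possible because units modulo
`gcd(q, N)` lift to units modulo `N`). Then `p'` is prime to `qN`, so some `a` inverts `p'`
modulo `qN`; in particular `a p ≡ 1 (mod q)`, giving `a p + b q = 1`. For any `w` the matrix
`(a b; a w - q, p + b w)` has determinant `1` and sends `(p, q)` to `(1, w)`, and its lower left
entry `a w - q ≡ a p' q - q ≡ 0 (mod N)` as soon as `w ≡ p' q (mod N)`.
-/

open Matrix

theorem IsCoprime.exists_isCoprime_add_mul {x y : ℤ} (hxy : IsCoprime x y) (N : ℕ) [NeZero N] :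
    ∃ k : ℤ, IsCoprime (x + y * k) N := by
  set g := Int.gcd y N
  have hgN : g ∣ N := Int.natCast_dvd_natCast.mp (Int.gcd_dvd_right y N)
  have hx : IsUnit (x : ZMod g) := (ZMod.coe_int_isUnit_iff_isCoprime x g).mpr
    (hxy.of_isCoprime_of_dvd_right (Int.gcd_dvd_left y N)).symm
  obtain ⟨u, hu⟩ := ZMod.unitsMap_surjective hgN hx.unit
  set z : ℤ := ((u : ZMod N).val : ℤ)
  have hzN : IsCoprime z N := by
    refine ((ZMod.coe_int_isUnit_iff_isCoprime z N).mp ?_).symm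
    simp [z]
  have hzx : (g : ℤ) ∣ z - x := by
    rw [← ZMod.intCast_eq_intCast_iff_dvd_sub]
    have := congrArg Units.val hu
    rw [ZMod.unitsMap_val, IsUnit.unit_spec, ZMod.cast_eq_val] at this
    simpa [z] using this.symm
  obtain ⟨t, ht⟩ := hzx
  refine ⟨Int.gcdA y N * t, ?_⟩
  -- `z - x` is a multiple of `gcd y N = y * gcdA + N * gcdB`
  have hz : x + y * (Int.gcdA y N * t) = z + N * -(Int.gcdB y N * t) := by
    linear_combination (-1 : ℤ) * ht - t * Int.gcd_eq_gcd_ab y N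
  rw [hz]
  exact hzN.add_mul_left_left _

theorem Int.exists_mem_Icc_modEq {N : ℤ} (hN : 0 < N) (x : ℤ) :
    ∃ w, 1 ≤ w ∧ w ≤ N ∧ w ≡ x [ZMOD N] := by
  refine ⟨(x - 1) % N + 1, ?_, ?_, ?_⟩
  · linarith [Int.emod_nonneg (x - 1) hN.ne']
  · linarith [Int.emod_lt_of_pos (x - 1) hN]
  · calc (x - 1) % N + 1 ≡ x - 1 + 1 [ZMOD N] := (Int.mod_modEq _ _).add_right 1
      _ = x := by ring

namespace Matrix

variable {R : Type*} [CommRing R] {a b p q : R}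

theorem det_of_add_mul_eq_one (h : a * p + b * q = 1) (w : R) :
    !![a, b; a * w - q, p + b * w].det = 1 := by
  rw [det_fin_two_of]
  linear_combination h

theorem mulVec_of_add_mul_eq_one (h : a * p + b * q = 1) (w : R) :
    !![a, b; a * w - q, p + b * w] *ᵥ ![p, q] = ![1, w] := by
  simp only [cons_mulVec, empty_mulVec, vec2_dotProduct']
  exact vec2_eq h (by linear_combination w * h)

end Matrix

theorem stmt_6_general (N : ℤ) (hN : 0 < N) (p q : ℤ) (hpq : IsCoprime p q) :
    ∃ γ : Matrix (Fin 2) (Fin 2) ℤ, ∃ w p' : ℤ,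
      γ.det = 1 ∧ N ∣ γ 1 0 ∧
      1 ≤ w ∧ w ≤ N ∧
      p' ≡ p [ZMOD Int.gcd q N] ∧ IsCoprime p' N ∧
      γ 0 0 * p + γ 0 1 * q = 1 ∧ γ 1 0 * p + γ 1 1 * q = w ∧
      w ≡ p' * q [ZMOD N] := by
  lift N to ℕ using hN.le
  have : NeZero N := ⟨by omega⟩
  obtain ⟨k, hk⟩ := hpq.exists_isCoprime_add_mul N
  have hkqN := (hpq.add_mul_left_left k).mul_right hk
  generalize hp' : p + q * k = p' at hk hkqN
  obtain ⟨a, s, hbez⟩ := hkqN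
  obtain ⟨w, hw1, hwN, hw⟩ := Int.exists_mem_Icc_modEq hN (p' * q)
  have hab : a * p + (a * k + s * N) * q = 1 := by linear_combination hbez + a * hp'
  have hap' : a * p' ≡ 1 [ZMOD N] := Int.modEq_iff_dvd.mpr ⟨s * q, by linear_combination -hbez⟩
  have hγ : a * w ≡ q [ZMOD N] :=
    calc a * w ≡ a * (p' * q) [ZMOD N] := hw.mul_left a
      _ = a * p' * q := by ring
      _ ≡ 1 * q [ZMOD N] := hap'.mul_right q
      _ = q := one_mul q
  have hv := congrFun (mulVec_of_add_mul_eq_one hab w)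
  have hp'p : p' ≡ p [ZMOD Int.gcd q N] :=
    hp' ▸ Int.ModEq.of_dvd (Int.gcd_dvd_left q N) (Int.add_mul_emod_self_left p q k)
  refine ⟨_, w, p', det_of_add_mul_eq_one hab w, by simpa using hγ.symm.dvd, hw1, hwN, hp'p, hk,
    ?_, ?_, hw⟩
  · simpa [mulVec, dotProduct] using hv 0
  · simpa [mulVec, dotProduct] using hv 1

/-- **Every cusp is equivalent to one of the form `1/w`** (part of Proposition 3.2 of the
paper): given a cusp `p/q` in lowest terms, there are `γ ∈ Γ₀(N)` and `1 ≤ w ≤ N` with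
`γ·(p,q)ᵀ = (1,w)ᵀ`, and moreover `w ≡ p′q (mod N)` for some `p′ ≡ p (mod (q,N))` with
`(p′,N) = 1`. -/
theorem stmt_6 (N : ℤ) (hN : 0 < N) (p q : ℤ) (hpq : IsCoprime p q) (hq : 1 ≤ q) :
    ∃ γ : Matrix (Fin 2) (Fin 2) ℤ, ∃ w p' : ℤ,
      γ.det = 1 ∧ N ∣ γ 1 0 ∧
      1 ≤ w ∧ w ≤ N ∧
      p' ≡ p [ZMOD Int.gcd q N] ∧ IsCoprime p' N ∧
      γ 0 0 * p + γ 0 1 * q = 1 ∧ γ 1 0 * p + γ 1 1 * q = w ∧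
      w ≡ p' * q [ZMOD N] :=
  stmt_6_general N hN p q hpq
end

section
/- Let N be a positive integer and let v, w be positive integers. Then there exists γ ∈ Γ₀(N) with γ·(1, w)ᵀ = (1, v)ᵀ or γ·(1, w)ᵀ = (−1, −v)ᵀ if and only if gcd(v, N) = gcd(w, N) and v/gcd(v,N) ≡ w/gcd(w,N) (mod gcd(gcd(w,N), N/gcd(w,N))). -/
/-!
Write `γ = !![a, b; c, d]` and `ε = ±1`. The conditions `a + b w = ε`, `c + d w = ε v` and
`det γ = 1` force `d = ε + b v` and `c = -ε (w - v + v w t)` with `t = ε b`, so a suitable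
`γ ∈ Γ₀(N)` exists iff `N ∣ w - v + v w t` for some integer `t`. Any such `t` gives
`gcd(v, N) = gcd(w, N) =: g`, since a common divisor of `N` and one of `v`, `w` divides the other.
Writing `v = g v'`, `w = g w'`, `N = g N'`, the condition becomes the linear congruence
`N' ∣ (w' - v') + (g v' w') t`, solvable iff `gcd(g v' w', N') ∣ w' - v'`, and
`gcd(g v' w', N') = gcd(g, N')` because `v'` and `w'` are prime to `N'`.
-/

theorem exists_Gamma0_cusp_eq_iff (N v w : ℤ) :
    (∃ γ : Matrix (Fin 2) (Fin 2) ℤ, γ.det = 1 ∧ N ∣ γ 1 0 ∧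
        ((γ 0 0 + γ 0 1 * w = 1 ∧ γ 1 0 + γ 1 1 * w = v) ∨
          (γ 0 0 + γ 0 1 * w = -1 ∧ γ 1 0 + γ 1 1 * w = -v))) ↔
      ∃ t : ℤ, N ∣ w - v + v * w * t := by
  constructor
  · rintro ⟨γ, hdet, ⟨k, hk⟩, ⟨ha, hc⟩ | ⟨ha, hc⟩⟩ <;>
      rw [Matrix.det_fin_two] at hdet
    · exact ⟨γ 0 1, -k, by
        linear_combination -hk + (1 - w * γ 0 1) * hc - w * hdet + w * γ 1 1 * ha⟩
    · exact ⟨-γ 0 1, k, by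
        linear_combination hk - w * hdet + w * γ 1 1 * ha - (w * γ 0 1 + 1) * hc⟩
  · rintro ⟨t, k, hk⟩
    refine ⟨!![1 - t * w, t; -(w - v + v * w * t), 1 + t * v], ?_, ⟨-k, by simp [hk]⟩,
      Or.inl ⟨by simp, show -(w - v + v * w * t) + (1 + t * v) * w = v by ring⟩⟩
    rw [Matrix.det_fin_two_of]
    ring

theorem Int.exists_dvd_add_mul_iff {a n c : ℤ} :
    (∃ t, n ∣ c + a * t) ↔ (Int.gcd a n : ℤ) ∣ c := by
  rw [Int.coe_gcd, gcd_dvd_iff_exists]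
  constructor
  · rintro ⟨t, k, hk⟩
    exact ⟨-t, k, by linear_combination hk⟩
  · rintro ⟨x, y, h⟩
    exact ⟨-x, y, by linear_combination h⟩

theorem Int.gcd_dvd_of_dvd_sub_add_mul {x y n s : ℤ} (h : n ∣ x - y + x * s) :
    (Int.gcd x n : ℤ) ∣ y := by
  have hx : (Int.gcd x n : ℤ) ∣ x := Int.gcd_dvd_left x n
  have hn : (Int.gcd x n : ℤ) ∣ x - y + x * s := (Int.gcd_dvd_right x n).trans h
  have hy : y = x * (1 + s) - (x - y + x * s) := by ring
  exact hy ▸ (hx.mul_right (1 + s)).sub hn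

theorem Int.gcd_eq_gcd_of_dvd_sub_add_mul {n v w t : ℤ} (h : n ∣ w - v + v * w * t) :
    Int.gcd v n = Int.gcd w n := by
  refine Nat.dvd_antisymm (Int.natCast_dvd_natCast.1 ?_) (Int.natCast_dvd_natCast.1 ?_)
  · refine Int.dvd_coe_gcd (Int.gcd_dvd_of_dvd_sub_add_mul (s := -(w * t)) ?_)
      (Int.gcd_dvd_right _ _)
    rw [show v - w + v * -(w * t) = -(w - v + v * w * t) by ring]
    exact h.neg_right
  · refine Int.dvd_coe_gcd (Int.gcd_dvd_of_dvd_sub_add_mul (s := v * t) ?_)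
      (Int.gcd_dvd_right _ _)
    rwa [show w - v + w * (v * t) = w - v + v * w * t by ring]

theorem exists_dvd_sub_add_mul_iff {N v w : ℕ} (hN : 0 < N) (hvw : Nat.gcd v N = Nat.gcd w N) :
    (∃ t : ℤ, (N : ℤ) ∣ w - v + v * w * t) ↔
      ((Nat.gcd (Nat.gcd w N) (N / Nat.gcd w N) : ℕ) : ℤ) ∣
        ((w / Nat.gcd w N : ℕ) : ℤ) - ((v / Nat.gcd v N : ℕ) : ℤ) := by
  rw [hvw]
  set g := Nat.gcd w N
  have hg0 : 0 < g := Nat.gcd_pos_of_pos_right w hN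
  have hcop_w : Nat.Coprime (w / g) (N / g) := Nat.coprime_div_gcd_div_gcd hg0
  have hcop_v : Nat.Coprime (v / g) (N / g) := by
    rw [← hvw] at hg0 ⊢
    exact Nat.coprime_div_gcd_div_gcd hg0
  have hgcd :
      Int.gcd ((g * (v / g) * (w / g) : ℕ) : ℤ) ((N / g : ℕ) : ℤ) = Nat.gcd g (N / g) := by
    rw [Int.gcd_natCast_natCast, hcop_w.gcd_mul_right_cancel, hcop_v.gcd_mul_right_cancel]
  have hscale (t : ℤ) : (N : ℤ) ∣ w - v + v * w * t ↔
      ((N / g : ℕ) : ℤ) ∣ ((w / g : ℕ) : ℤ) - ((v / g : ℕ) : ℤ) +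
        ((g * (v / g) * (w / g) : ℕ) : ℤ) * t := by
    have hw : (w : ℤ) = g * (w / g : ℕ) := by
      exact_mod_cast (Nat.mul_div_cancel' (Nat.gcd_dvd_left w N)).symm
    have hv : (v : ℤ) = g * (v / g : ℕ) := by
      exact_mod_cast (Nat.mul_div_cancel' (hvw ▸ Nat.gcd_dvd_left v N)).symm
    have hN' : (N : ℤ) = g * (N / g : ℕ) := by
      exact_mod_cast (Nat.mul_div_cancel' (Nat.gcd_dvd_right w N)).symm
    rw [hN', hv, hw, Nat.cast_mul, Nat.cast_mul]
    refine Iff.trans ?_ (mul_dvd_mul_iff_left (by exact_mod_cast hg0.ne' : (g : ℤ) ≠ 0))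
    congr! 1
    ring
  simp_rw [hscale, Int.exists_dvd_add_mul_iff, hgcd]

theorem stmt_7_general (N v w : ℕ) (hN : 0 < N) :
    (∃ γ : Matrix (Fin 2) (Fin 2) ℤ, γ.det = 1 ∧ (N : ℤ) ∣ γ 1 0 ∧
        ((γ 0 0 + γ 0 1 * w = 1 ∧ γ 1 0 + γ 1 1 * w = v) ∨
          (γ 0 0 + γ 0 1 * w = -1 ∧ γ 1 0 + γ 1 1 * w = -(v : ℤ)))) ↔
      (Nat.gcd v N = Nat.gcd w N ∧
        v / Nat.gcd v N ≡ w / Nat.gcd w N [MOD Nat.gcd (Nat.gcd w N) (N / Nat.gcd w N)]) := by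
  rw [exists_Gamma0_cusp_eq_iff, Nat.modEq_iff_dvd]
  constructor
  · rintro ⟨t, ht⟩
    have hvw : Nat.gcd v N = Nat.gcd w N := by
      simpa only [Int.gcd_natCast_natCast] using Int.gcd_eq_gcd_of_dvd_sub_add_mul ht
    exact ⟨hvw, (exists_dvd_sub_add_mul_iff hN hvw).1 ⟨t, ht⟩⟩
  · rintro ⟨hvw, hm⟩
    exact (exists_dvd_sub_add_mul_iff hN hvw).2 hm

/-- **Equivalence criterion for cusps `1/w` and `1/v`** (Proposition 3.2, Equation (3.8) of
the paper): the cusps `1/w` and `1/v` are `Γ₀(N)`-equivalent iff `(v,N) = (w,N)` and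
`v/(v,N) ≡ w/(w,N) (mod ((w,N), N/(w,N)))`. -/
theorem stmt_7 (N v w : ℕ) (hN : 0 < N) (hv : 0 < v) (hw : 0 < w) :
    (∃ γ : Matrix (Fin 2) (Fin 2) ℤ, γ.det = 1 ∧ (N : ℤ) ∣ γ 1 0 ∧
        ((γ 0 0 + γ 0 1 * w = 1 ∧ γ 1 0 + γ 1 1 * w = v) ∨
          (γ 0 0 + γ 0 1 * w = -1 ∧ γ 1 0 + γ 1 1 * w = -(v : ℤ)))) ↔
      (Nat.gcd v N = Nat.gcd w N ∧
        v / Nat.gcd v N ≡ w / Nat.gcd w N [MOD Nat.gcd (Nat.gcd w N) (N / Nat.gcd w N)]) :=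
  stmt_7_general N v w hN
end

section
/- Let N and w be positive integers, and set f = gcd(N, w), N′ = N/f, N″ = N′/gcd(N′, w). Then for γ ∈ Γ₀(N): γ·(1, w)ᵀ = (1, w)ᵀ or γ·(1, w)ᵀ = (−1, −w)ᵀ if and only if there exists an integer t such that γ = ε·[[1 − wN″t, N″t], [−w²N″t, 1 + wN″t]] with ε ∈ {+1, −1}. (In particular, N divides w²N″, so that all such matrices lie in Γ₀(N).) -/
open Matrix

/-- **Stabilizer of the cusp `1/w` in `Γ₀(N)`** (Proposition 3.4 of the paper): with
`f = (N,w)`, `N′ = N/f`, `N″ = N′/(N′,w)`, the stabilizer of `1/w` consists exactly of the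
matrices `± !![1 - wN″t, N″t; -w²N″t, 1 + wN″t]`, `t ∈ ℤ`; in particular `N ∣ w²N″`. -/
theorem stmt_9 (N w : ℕ) (hN : 0 < N) (hw : 0 < w)
    (f N' N'' : ℕ) (hf : f = Nat.gcd N w) (hN' : N' = N / f) (hN'' : N'' = N' / Nat.gcd N' w) :
    (N : ℤ) ∣ (w : ℤ) ^ 2 * (N'' : ℤ) ∧
    ∀ γ : Matrix (Fin 2) (Fin 2) ℤ, γ.det = 1 → (N : ℤ) ∣ γ 1 0 →
      (((γ 0 0 + γ 0 1 * w = 1 ∧ γ 1 0 + γ 1 1 * w = (w : ℤ)) ∨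
        (γ 0 0 + γ 0 1 * w = -1 ∧ γ 1 0 + γ 1 1 * w = -(w : ℤ))) ↔
      ∃ t ε : ℤ, (ε = 1 ∨ ε = -1) ∧
        γ = ε • !![1 - (w : ℤ) * N'' * t, (N'' : ℤ) * t;
                   -(w : ℤ) ^ 2 * N'' * t, 1 + (w : ℤ) * N'' * t]) := by
  subst hf hN' hN''
  set f := Nat.gcd N w with hf
  set N' := N / f with hN'
  set g := Nat.gcd N' w with hg
  set N'' := N' / g with hN''
  have hf0 : 0 < f := Nat.gcd_pos_of_pos_left _ hN
  have hfN : f ∣ N := Nat.gcd_dvd_left N w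
  have hfw : f ∣ w := Nat.gcd_dvd_right N w
  have hNf : N = f * N' := (Nat.mul_div_cancel' hfN).symm
  have hN'0 : 0 < N' := Nat.div_pos (Nat.le_of_dvd hN hfN) hf0
  have hg0 : 0 < g := Nat.gcd_pos_of_pos_left _ hN'0
  have hgN' : g ∣ N' := Nat.gcd_dvd_left _ _
  have hgw : g ∣ w := Nat.gcd_dvd_right _ _
  have hN'g : N' = g * N'' := (Nat.mul_div_cancel' hgN').symm
  have hwf : w = f * (w / f) := (Nat.mul_div_cancel' hfw).symm
  have hwg : w = g * (w / g) := (Nat.mul_div_cancel' hgw).symm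
  have hdvd : (N : ℤ) ∣ (w : ℤ) ^ 2 * (N'' : ℤ) := by
    have h1 : f * g ∣ w * w := mul_dvd_mul hfw hgw
    have h2 : N ∣ w ^ 2 * N'' := by
      rw [hNf, hN'g, ← mul_assoc, pow_two]
      exact mul_dvd_mul h1 dvd_rfl
    exact_mod_cast Int.natCast_dvd_natCast.mpr h2
  have key : ∀ b : ℤ, (N : ℤ) ∣ b * (w : ℤ) ^ 2 → (N'' : ℤ) ∣ b := by
    intro b hb
    have cop1 : IsCoprime ((N' : ℕ) : ℤ) ((w / f : ℕ) : ℤ) :=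
      Nat.isCoprime_iff_coprime.mpr (Nat.coprime_div_gcd_div_gcd hf0)
    have cop2 : IsCoprime ((N'' : ℕ) : ℤ) ((w / g : ℕ) : ℤ) :=
      Nat.isCoprime_iff_coprime.mpr (Nat.coprime_div_gcd_div_gcd hg0)
    have hf0' : (f : ℤ) ≠ 0 := by exact_mod_cast hf0.ne'
    have hg0' : (g : ℤ) ≠ 0 := by exact_mod_cast hg0.ne'
    -- Step 1 : N' ∣ b * w * (w/f)
    have step1 : (N' : ℤ) ∣ b * (w : ℤ) * ((w / f : ℕ) : ℤ) := by
      have : (f : ℤ) * (N' : ℤ) ∣ (f : ℤ) * (b * (w : ℤ) * ((w / f : ℕ) : ℤ)) := by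
        have hNe : (N : ℤ) = (f : ℤ) * (N' : ℤ) := by exact_mod_cast congrArg (Nat.cast : ℕ → ℤ) hNf
        have hwe : (w : ℤ) = (f : ℤ) * ((w / f : ℕ) : ℤ) := by exact_mod_cast congrArg (Nat.cast : ℕ → ℤ) hwf
        rw [← hNe]
        calc (N : ℤ) ∣ b * (w : ℤ) ^ 2 := hb
          _ = (f : ℤ) * (b * (w : ℤ) * ((w / f : ℕ) : ℤ)) := by rw [pow_two]; nth_rewrite 2 [hwe]; ring
      exact (mul_dvd_mul_iff_left hf0').mp this
    have step2 : (N' : ℤ) ∣ b * (w : ℤ) := cop1.dvd_of_dvd_mul_right step1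
    have step3 : (N'' : ℤ) ∣ b * ((w / g : ℕ) : ℤ) := by
      have hN'e : (N' : ℤ) = (g : ℤ) * (N'' : ℤ) := by exact_mod_cast congrArg (Nat.cast : ℕ → ℤ) hN'g
      have hwe : (w : ℤ) = (g : ℤ) * ((w / g : ℕ) : ℤ) := by exact_mod_cast congrArg (Nat.cast : ℕ → ℤ) hwg
      have : (g : ℤ) * (N'' : ℤ) ∣ (g : ℤ) * (b * ((w / g : ℕ) : ℤ)) := by
        rw [← hN'e]
        calc (N' : ℤ) ∣ b * (w : ℤ) := step2
          _ = (g : ℤ) * (b * ((w / g : ℕ) : ℤ)) := by rw [hwe]; ring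
      exact (mul_dvd_mul_iff_left hg0').mp this
    exact cop2.dvd_of_dvd_mul_right step3
  refine ⟨hdvd, fun γ hdet hc => ?_⟩
  rw [Matrix.det_fin_two] at hdet
  constructor
  · rintro (⟨h1, h2⟩ | ⟨h1, h2⟩)
    · have hd : γ 1 1 = 1 + γ 0 1 * w := by linear_combination hdet - γ 1 1 * h1 + γ 0 1 * h2
      have hcc : γ 1 0 = -(γ 0 1) * (w : ℤ) ^ 2 := by linear_combination h2 - (w : ℤ) * hd
      have hb : (N'' : ℤ) ∣ γ 0 1 := by
        apply key
        have := (dvd_neg).mpr hc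
        rw [hcc] at this
        simpa using this
      obtain ⟨t, ht⟩ := hb
      refine ⟨t, 1, Or.inl rfl, ?_⟩
      rw [one_smul]
      ext i j
      fin_cases i <;> fin_cases j <;>
        simp [Matrix.cons_val_zero, Matrix.cons_val_one, Matrix.head_cons]
      · linear_combination h1 - (w : ℤ) * ht
      · exact ht
      · linear_combination hcc - (w : ℤ) ^ 2 * ht
      · linear_combination hd + (w : ℤ) * ht
    · have hd : γ 1 1 = γ 0 1 * w - 1 := by linear_combination -hdet + γ 1 1 * h1 - γ 0 1 * h2
      have hcc : γ 1 0 = -(γ 0 1) * (w : ℤ) ^ 2 := by linear_combination h2 - (w : ℤ) * hd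
      have hb : (N'' : ℤ) ∣ γ 0 1 := by
        apply key
        have := (dvd_neg).mpr hc
        rw [hcc] at this
        simpa using this
      obtain ⟨s, hs⟩ := hb
      refine ⟨-s, -1, Or.inr rfl, ?_⟩
      ext i j
      fin_cases i <;> fin_cases j <;>
        simp [Matrix.cons_val_zero, Matrix.cons_val_one, Matrix.head_cons]
      · linear_combination h1 - (w : ℤ) * hs
      · linear_combination hs
      · linear_combination hcc - (w : ℤ) ^ 2 * hs
      · linear_combination hd + (w : ℤ) * hs
  · rintro ⟨t, ε, (rfl | rfl), rfl⟩
    · left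
      constructor <;>
        · simp [Matrix.cons_val_zero, Matrix.cons_val_one, Matrix.head_cons]
          ring
    · right
      constructor <;>
        · simp [Matrix.cons_val_zero, Matrix.cons_val_one, Matrix.head_cons]
          ring
end

section
/- Let N = rs with r, s positive integers and gcd(r, s) = 1, let w be a positive integer, let s̄ be an integer with s·s̄ ≡ 1 (mod r), and set τ_{1/w} = [[1, 0], [w, 1]] and τ_r = [[1, (s̄s − 1)/r], [r, s̄s]]. Then τ_{1/w}⁻¹ · Γ₀(N) · τ_r = { (A B; C D) ∈ SL₂(ℤ) : C ≡ −wA (mod r) and D ≡ −wB (mod s) }. -/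
open Matrix

/-- **Double coset for a general cusp and an Atkin–Lehner cusp** (Lemma 3.6 of the paper,
integral part): with `N = rs`, `(r,s) = 1`, `τ_{1/w} = !![1,0;w,1]` and
`τ_r = !![1,(s̄s-1)/r; r, s̄s]`, one has
`τ_{1/w}⁻¹ Γ₀(N) τ_r = {(A B; C D) ∈ SL₂(ℤ) : C ≡ -wA (mod r), D ≡ -wB (mod s)}`. -/
theorem stmt_10 (r s : ℕ) (hr : 0 < r) (hs : 0 < s) (hrs : Nat.Coprime r s)
    (w : ℕ) (hw : 0 < w) (sbar b : ℤ) (hb : sbar * s - 1 = r * b) :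
    {M : Matrix (Fin 2) (Fin 2) ℤ |
      ∃ γ : Matrix (Fin 2) (Fin 2) ℤ, γ.det = 1 ∧ ((r * s : ℕ) : ℤ) ∣ γ 1 0 ∧
        M = (!![1, 0; (w : ℤ), 1])⁻¹ * γ * !![1, b; (r : ℤ), sbar * s]} =
    {M : Matrix (Fin 2) (Fin 2) ℤ |
      M.det = 1 ∧ M 1 0 ≡ -(w : ℤ) * M 0 0 [ZMOD (r : ℤ)] ∧
        M 1 1 ≡ -(w : ℤ) * M 0 1 [ZMOD (s : ℤ)]} := by
  have hinv : (!![1, 0; (w : ℤ), 1])⁻¹ = !![1, 0; -(w : ℤ), 1] := by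
    apply Matrix.inv_eq_left_inv
    ext i j
    fin_cases i <;> fin_cases j <;>
      simp [Matrix.mul_apply, Fin.sum_univ_two]
  have e1 : !![1, 0; -(w : ℤ), 1] * !![1, 0; (w : ℤ), 1] = 1 := by
    ext i j
    fin_cases i <;> fin_cases j <;>
      simp [Matrix.mul_apply, Fin.sum_univ_two]
  have e2 : !![sbar * s, -b; -(r : ℤ), 1] * !![1, b; (r : ℤ), sbar * s] = 1 := by
    ext i j
    fin_cases i <;> fin_cases j <;>
      simp [Matrix.mul_apply, Fin.sum_univ_two] <;> (first | linear_combination hb | ring)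
  ext M
  simp only [Set.mem_setOf_eq]
  constructor
  · rintro ⟨γ, hdet, ⟨k, hk⟩, rfl⟩
    rw [hinv]
    refine ⟨?_, ?_, ?_⟩
    · rw [Matrix.det_mul, Matrix.det_mul, hdet, Matrix.det_fin_two_of,
        Matrix.det_fin_two_of]
      linear_combination hb
    · rw [Int.modEq_iff_dvd]
      refine ⟨-((s : ℤ) * k) - γ 1 1, ?_⟩
      simp [Matrix.mul_apply, Matrix.vecMul, dotProduct, Matrix.vecHead, Matrix.vecTail, Fin.sum_univ_two]
      push_cast at hk ⊢
      linear_combination -hk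
    · rw [Int.modEq_iff_dvd]
      refine ⟨-((r : ℤ) * k * b) - γ 1 1 * sbar, ?_⟩
      simp [Matrix.mul_apply, Matrix.vecMul, dotProduct, Matrix.vecHead, Matrix.vecTail, Fin.sum_univ_two]
      push_cast at hk ⊢
      linear_combination -b * hk
  · rintro ⟨hdet, h1, h2⟩
    obtain ⟨u, hu⟩ := Int.modEq_iff_dvd.mp h1
    obtain ⟨v, hv⟩ := Int.modEq_iff_dvd.mp h2
    refine ⟨!![1, 0; (w : ℤ), 1] * M * !![sbar * s, -b; -(r : ℤ), 1], ?_, ?_, ?_⟩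
    · rw [Matrix.det_mul, Matrix.det_mul, hdet, Matrix.det_fin_two_of,
        Matrix.det_fin_two_of]
      linear_combination hb
    · refine ⟨v - u * sbar, ?_⟩
      simp [Matrix.mul_apply, Matrix.vecMul, dotProduct, Matrix.vecHead, Matrix.vecTail, Fin.sum_univ_two]
      push_cast
      linear_combination (-(sbar : ℤ) * s) * hu + (r : ℤ) * hv
    · rw [hinv]
      simp only [Matrix.mul_assoc]
      rw [e2, mul_one, ← Matrix.mul_assoc, e1, one_mul]
end

section
/- Let N = rs with r, s positive integers and gcd(r, s) = 1, let f be a divisor of N and v an integer with gcd(v, N) = 1, and set w = vf, f_r = gcd(w, r), f_s = gcd(w, s), r′ = r/f_r, s′ = s/f_s. Let C, D be integers with C > 0 and gcd(C, D) = 1. Then the following are equivalent: (a) there exist integers A, B with AD − BC = 1, C ≡ −wA (mod r), and D ≡ −wB (mod s); (b) gcd(C, r) = f_r, gcd(D, s) = f_s, D·(C/f_r) ≡ −(w/f_r) (mod gcd(f_r, r′)), and (D/f_s)·C ≡ (w/f_s) (mod gcd(f_s, s′)). -/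
/-!
For `m ∈ {r, s}` write `g = (w, m)`, `m = g m′`, `w = g w₁` with `(w₁, m′) = 1`. If `AD − BC = 1`,
the congruence `C ≡ −wA (mod m)` forces `(C, m) = g` and then reduces to `C/g ≡ −w₁A (mod m′)`;
modulo `(g, m′)`, which divides `C`, `A` is an inverse of `D`, so this becomes `D·(C/g) ≡ −w₁`.
Conversely, starting from any `(A, B)` completing the coprime pair `(C, D)`, the shifts
`(A + tC, B + tD)` keep the determinant, and the condition at `m` becomes the linear congruence
`t·w₁C ≡ −w₁A − C/g (mod m′)`, solvable because `(C, m′)` divides `(g, m′)`. Since `(r′, s′) = 1`,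
the Chinese remainder theorem meets both conditions at once. The condition at `s` is the one at `r`
for the column `(D, B)` completed by `(−C, −A)`, which explains the change of sign.
-/

namespace Int

theorem exists_modEq_and_modEq_of_isCoprime {m n : ℤ} (h : IsCoprime m n) (a b : ℤ) :
    ∃ t, t ≡ a [ZMOD m] ∧ t ≡ b [ZMOD n] := by
  obtain ⟨u, v, huv⟩ := h
  refine ⟨a * (v * n) + b * (u * m), ?_, ?_⟩
  · exact (modEq_iff_dvd.2 ⟨(b - a) * u, by linear_combination a * huv⟩).symm
  · exact (modEq_iff_dvd.2 ⟨(a - b) * v, by linear_combination b * huv⟩).symm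

theorem exists_mul_modEq_of_gcd_dvd {a b m : ℤ} (h : (a.gcd m : ℤ) ∣ b) :
    ∃ t, t * a ≡ b [ZMOD m] := by
  obtain ⟨k, rfl⟩ := h
  exact ⟨a.gcdA m * k, (modEq_iff_dvd.2 ⟨-(a.gcdB m * k), by rw [gcd_eq_gcd_ab]; ring⟩).symm⟩

theorem mul_modEq_iff_modEq_mul_of_mul_modEq_one {a d x y k : ℤ} (h : a * d ≡ 1 [ZMOD k]) :
    d * x ≡ y [ZMOD k] ↔ x ≡ y * a [ZMOD k] := by
  constructor
  · intro hx
    calc x = 1 * x := (one_mul x).symm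
      _ ≡ a * d * x [ZMOD k] := h.symm.mul_right x
      _ = a * (d * x) := mul_assoc _ _ _
      _ ≡ a * y [ZMOD k] := hx.mul_left a
      _ = y * a := mul_comm _ _
  · intro hx
    calc d * x ≡ d * (y * a) [ZMOD k] := hx.mul_left d
      _ = y * (a * d) := by ring
      _ ≡ y * 1 [ZMOD k] := h.mul_left y
      _ = y := mul_one y

theorem modEq_neg_mul_iff_ediv {C w A m g : ℤ} (hg : g ≠ 0) (hC : g ∣ C) (hw : g ∣ w)
    (hm : g ∣ m) : C ≡ -w * A [ZMOD m] ↔ C / g ≡ -(w / g) * A [ZMOD m / g] := by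
  obtain ⟨c, rfl⟩ := hC
  obtain ⟨u, rfl⟩ := hw
  obtain ⟨n, rfl⟩ := hm
  simp only [Int.mul_ediv_cancel_left _ hg]
  rw [show -(g * u) * A = g * (-u * A) by ring]
  exact ModEq.mul_left_cancel_iff' hg

theorem gcd_eq_gcd_of_modEq_neg_mul {C w A m : ℤ} (hAC : IsCoprime A C)
    (h : C ≡ -w * A [ZMOD m]) : C.gcd m = w.gcd m := by
  apply Nat.dvd_antisymm
  · have hdC := C.gcd_dvd_left m
    have hdm := C.gcd_dvd_right m
    have hdwA : (C.gcd m : ℤ) ∣ w * A := by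
      simpa using ((h.of_dvd hdm).dvd_iff).1 hdC
    have hdw := (IsCoprime.of_isCoprime_of_dvd_left hAC.symm hdC).dvd_of_dvd_mul_right hdwA
    exact natCast_dvd_natCast.1 (dvd_coe_gcd hdw hdm)
  · have hgw := w.gcd_dvd_left m
    have hgm := w.gcd_dvd_right m
    have hgC : (w.gcd m : ℤ) ∣ C :=
      ((h.of_dvd hgm).dvd_iff).2 (by simpa using hgw.mul_right A)
    exact natCast_dvd_natCast.1 (dvd_coe_gcd hgC hgm)

theorem mul_modEq_one_of_sub_mul_eq_one {A B C D k : ℤ} (hdet : A * D - B * C = 1) (hk : k ∣ C) :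
    A * D ≡ 1 [ZMOD k] := by
  obtain ⟨c, rfl⟩ := hk
  exact modEq_iff_dvd.2 ⟨-(B * c), by linear_combination -hdet⟩

end Int

section LowerRow

variable {m g m' : ℕ} {w A B C D : ℤ}

theorem isCoprime_ediv_gcd (hm : 0 < m) (hg : g = w.gcd m) (hm' : m' = m / g) :
    IsCoprime (w / g) (m' : ℤ) := by
  subst hg hm'
  rw [Int.isCoprime_iff_gcd_eq_one, Int.natCast_div]
  exact Int.gcd_div_gcd_div_gcd (Int.gcd_pos_of_ne_zero_right _ (by exact_mod_cast hm.ne'))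

theorem modEq_neg_mul_iff_of_gcd_eq (hm : 0 < m) (hg : g = w.gcd m) (hm' : m' = m / g)
    (hgcd : C.gcd m = g) : C ≡ -w * A [ZMOD m] ↔ C / g ≡ -(w / g) * A [ZMOD m'] := by
  have hg0 : (g : ℤ) ≠ 0 := by
    rw [← hgcd]; exact_mod_cast (Int.gcd_pos_of_ne_zero_right _ (by exact_mod_cast hm.ne')).ne'
  rw [hm', Int.natCast_div]
  exact Int.modEq_neg_mul_iff_ediv hg0 (hgcd ▸ C.gcd_dvd_left m) (hg ▸ w.gcd_dvd_left m)
    (hgcd ▸ C.gcd_dvd_right m)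

theorem gcd_eq_and_modEq_of_modEq_neg_mul (hm : 0 < m) (hg : g = w.gcd m) (hm' : m' = m / g)
    (hdet : A * D - B * C = 1) (hC : C ≡ -w * A [ZMOD m]) :
    C.gcd m = g ∧ D * (C / g) ≡ -(w / g) [ZMOD (g.gcd m' : ℤ)] := by
  have hgcd : C.gcd m = g :=
    hg ▸ Int.gcd_eq_gcd_of_modEq_neg_mul ⟨D, -B, by linear_combination hdet⟩ hC
  have hreduced := (modEq_neg_mul_iff_of_gcd_eq hm hg hm' hgcd).1 hC
  have hkC : ((g.gcd m' : ℕ) : ℤ) ∣ C :=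
    (Int.natCast_dvd_natCast.2 (Nat.gcd_dvd_left _ _)).trans (hgcd ▸ C.gcd_dvd_left m)
  have hkm' : ((g.gcd m' : ℕ) : ℤ) ∣ m' := Int.natCast_dvd_natCast.2 (Nat.gcd_dvd_right _ _)
  exact ⟨hgcd, (Int.mul_modEq_iff_modEq_mul_of_mul_modEq_one
    (Int.mul_modEq_one_of_sub_mul_eq_one hdet hkC)).2 (hreduced.of_dvd hkm')⟩

theorem exists_modEq_neg_mul_add_of_gcd_eq (hm : 0 < m) (hg : g = w.gcd m) (hm' : m' = m / g)
    (hdet : A * D - B * C = 1) (hgcd : C.gcd m = g)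
    (hcong : D * (C / g) ≡ -(w / g) [ZMOD (g.gcd m' : ℤ)]) :
    ∃ t₀, ∀ t, t ≡ t₀ [ZMOD m'] → C ≡ -w * (A + t * C) [ZMOD m] := by
  have hgC : (g : ℤ) ∣ C := hgcd ▸ C.gcd_dvd_left m
  have hkC : ((g.gcd m' : ℕ) : ℤ) ∣ C :=
    (Int.natCast_dvd_natCast.2 (Nat.gcd_dvd_left _ _)).trans hgC
  have hreduced : C / g ≡ -(w / g) * A [ZMOD (g.gcd m' : ℤ)] :=
    (Int.mul_modEq_iff_modEq_mul_of_mul_modEq_one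
      (Int.mul_modEq_one_of_sub_mul_eq_one hdet hkC)).1 hcong
  -- `w / g` is a unit mod `m'`, and `(C, m')` divides `(C, m) = g`
  have hsolvable : (((w / g) * C).gcd m' : ℤ) ∣ -(w / g) * A - C / g := by
    set d := ((w / g) * C).gcd m'
    have hdm' : (d : ℤ) ∣ m' := Int.gcd_dvd_right _ _
    have hdC : (d : ℤ) ∣ C :=
      ((isCoprime_ediv_gcd hm hg hm').of_isCoprime_of_dvd_right hdm').symm.dvd_of_dvd_mul_left
        (Int.gcd_dvd_left _ _)
    have hm'm : (m' : ℤ) ∣ m := Int.natCast_dvd_natCast.2 (hm' ▸ Nat.div_dvd_of_dvd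
      (Int.natCast_dvd_natCast.1 (hgcd ▸ C.gcd_dvd_right m)))
    have hdg : d ∣ g := hgcd ▸ Int.natCast_dvd_natCast.1 (Int.dvd_coe_gcd hdC (hdm'.trans hm'm))
    exact (Int.natCast_dvd_natCast.2 (Nat.dvd_gcd hdg (Int.natCast_dvd_natCast.1 hdm'))).trans
      (Int.modEq_iff_dvd.1 hreduced)
  obtain ⟨t₀, ht₀⟩ := Int.exists_mul_modEq_of_gcd_dvd hsolvable
  refine ⟨t₀, fun t ht => ?_⟩
  rw [modEq_neg_mul_iff_of_gcd_eq hm hg hm' hgcd, Int.modEq_iff_dvd]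
  convert Int.modEq_iff_dvd.1 ((ht.mul_right _).trans ht₀) using 1
  ring

end LowerRow

theorem stmt_12_general (r s : ℕ) (hr : 0 < r) (hs : 0 < s) (hrs : Nat.Coprime r s)
    (w : ℤ)
    (fr fs r' s' : ℕ)
    (hfr : fr = Int.gcd w r) (hfs : fs = Int.gcd w s)
    (hr' : r' = r / fr) (hs' : s' = s / fs)
    (C D : ℤ) (hCD : IsCoprime C D) :
    (∃ A B : ℤ, A * D - B * C = 1 ∧ C ≡ -w * A [ZMOD (r : ℤ)] ∧ D ≡ -w * B [ZMOD (s : ℤ)]) ↔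
    (Int.gcd C r = fr ∧ Int.gcd D s = fs ∧
      D * (C / (fr : ℤ)) ≡ -(w / (fr : ℤ)) [ZMOD (Nat.gcd fr r' : ℤ)] ∧
      (D / (fs : ℤ)) * C ≡ w / (fs : ℤ) [ZMOD (Nat.gcd fs s' : ℤ)]) := by
  constructor
  · rintro ⟨A, B, hdet, hCA, hDB⟩
    obtain ⟨hgr, hcr⟩ := gcd_eq_and_modEq_of_modEq_neg_mul hr hfr hr' hdet hCA
    obtain ⟨hgs, hcs⟩ := gcd_eq_and_modEq_of_modEq_neg_mul (D := -C) (B := -A) hs hfs hs'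
      (by linear_combination hdet) hDB
    refine ⟨hgr, hgs, hcr, ?_⟩
    simpa [mul_comm] using hcs.neg
  · rintro ⟨hgr, hgs, hcr, hcs⟩
    obtain ⟨a, b, hab⟩ := hCD
    obtain ⟨t₁, ht₁⟩ := exists_modEq_neg_mul_add_of_gcd_eq (A := b) (B := -a) hr hfr hr'
      (by linear_combination hab) hgr hcr
    obtain ⟨t₂, ht₂⟩ := exists_modEq_neg_mul_add_of_gcd_eq (A := -a) (B := -b) (D := -C)
      hs hfs hs' (by linear_combination hab) hgs (by simpa [mul_comm] using hcs.neg)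
    have hr's' : IsCoprime (r' : ℤ) s' := by
      rw [Nat.isCoprime_iff_coprime, hr', hs']
      exact (hrs.coprime_div_left (Int.natCast_dvd_natCast.1 (hfr ▸ Int.gcd_dvd_right w r)))
        |>.coprime_div_right (Int.natCast_dvd_natCast.1 (hfs ▸ Int.gcd_dvd_right w s))
    obtain ⟨t, htr, hts⟩ := Int.exists_modEq_and_modEq_of_isCoprime hr's' t₁ t₂
    exact ⟨b + t * C, -a + t * D, by linear_combination hab, ht₁ t htr, ht₂ t hts⟩

/-- **Characterization of the lower rows occurring in the double coset**
(Lemma 3.7 of the paper, reformulated for the bottom-row entries `C`, `D`): for coprime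
`C > 0`, `D`, there are `A`, `B` with `AD - BC = 1`, `C ≡ -wA (mod r)`, `D ≡ -wB (mod s)`
iff `(C,r) = f_r`, `(D,s) = f_s`, `D·(C/f_r) ≡ -(w/f_r) (mod (f_r,r′))` and
`(D/f_s)·C ≡ w/f_s (mod (f_s,s′))`. -/
theorem stmt_12 (r s : ℕ) (hr : 0 < r) (hs : 0 < s) (hrs : Nat.Coprime r s)
    (f : ℕ) (hf : f ∣ r * s) (v : ℤ) (hv : IsCoprime v ((r * s : ℕ) : ℤ))
    (w : ℤ) (hw : w = v * f)
    (fr fs r' s' : ℕ)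
    (hfr : fr = Int.gcd w r) (hfs : fs = Int.gcd w s)
    (hr' : r' = r / fr) (hs' : s' = s / fs)
    (C D : ℤ) (hC : 0 < C) (hCD : IsCoprime C D) :
    (∃ A B : ℤ, A * D - B * C = 1 ∧ C ≡ -w * A [ZMOD (r : ℤ)] ∧ D ≡ -w * B [ZMOD (s : ℤ)]) ↔
    (Int.gcd C r = fr ∧ Int.gcd D s = fs ∧
      D * (C / (fr : ℤ)) ≡ -(w / (fr : ℤ)) [ZMOD (Nat.gcd fr r' : ℤ)] ∧
      (D / (fs : ℤ)) * C ≡ w / (fs : ℤ) [ZMOD (Nat.gcd fs s' : ℤ)]) :=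
  stmt_12_general r s hr hs hrs w fr fs r' s' hfr hfs hr' hs' C D hCD
end
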